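/- arXiv:math/0006048 — 4 statements merged into one kernel-verified Lean document; each statement's English description precedes it below -/
import Mathlib

section
/- Let A be a bialgebra and M, N left-right Yetter-Drinfel'd modules over A. For (ω',ρ') ∈ Z^1(M,N), the sequence 0 → N → N⊕_{(ω',ρ')}M → M → 0 (with the canonical inclusion and projection) is an extension of M by N in the category of left-right Yetter-Drinfel'd modules, and every extension of M by N in this category is equivalent to one of this form. -/
open TensorProduct
noncomputable section

namespace PS

variable (k : Type) [Field k] (A : Type) [Ring A] [Bialgebra k A]

/-- Left-nested tensor powers with base `B`: `pwr B n = B ⊗ A ⊗ ⋯ ⊗ A` (`n` copies of `A`). -/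
def pwr (B : ModuleCat k) : ℕ → ModuleCat k
  | 0 => B
  | n + 1 => ModuleCat.of k (pwr B n ⊗[k] A)

/-- `A^{⊗ n}` realized as `pwr k n`, i.e. `k ⊗ A ⊗ ⋯ ⊗ A`. -/
abbrev Pk (n : ℕ) : ModuleCat k := pwr k A (ModuleCat.of k k) n

abbrev μA : A ⊗[k] A →ₗ[k] A := LinearMap.mul' k A
abbrev ΔA : A →ₗ[k] A ⊗[k] A := Coalgebra.comul
abbrev εA : A →ₗ[k] k := Coalgebra.counit

/-- Multiplication of the tensorands in slots `i` and `i+1` (`1 ≤ i ≤ n`);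
junk (zero map) for other `i`. -/
def mulP : (n : ℕ) → (i : ℕ) → ((Pk k A (n+1) : Type) →ₗ[k] Pk k A n)
  | 0, _ => 0
  | n + 1, i =>
      if i = n + 1 then
        (TensorProduct.map (LinearMap.id : (Pk k A n : Type) →ₗ[k] Pk k A n) (μA k A)).comp
          (TensorProduct.assoc k (Pk k A n) A A).toLinearMap
      else
        TensorProduct.map (mulP n i) (LinearMap.id : A →ₗ[k] A)

/-- Insert an `A`-factor at the innermost slot (slot 1). -/
def insP : (n : ℕ) → (A ⊗[k] (Pk k A n : Type)) ≃ₗ[k] (Pk k A (n+1) : Type)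
  | 0 => TensorProduct.comm k A k
  | n + 1 =>
      (TensorProduct.assoc k A (Pk k A n) A).symm.trans
        (TensorProduct.congr (insP n) (LinearEquiv.refl k A))

section NM

variable {N : Type} [AddCommGroup N] [Module k N]

/-- The left diagonal action of `A` on `N ⊗ A^{⊗ p}` built from a base action `ωN`. -/
def ldiag (ωN : A ⊗[k] N →ₗ[k] N) :
    (p : ℕ) → (A ⊗[k] (pwr k A (ModuleCat.of k N) p : Type) →ₗ[k] pwr k A (ModuleCat.of k N) p)
  | 0 => ωN
  | p + 1 =>
      (TensorProduct.map (ldiag ωN p) (μA k A)).comp <|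
        ((TensorProduct.tensorTensorTensorComm k A A
            (pwr k A (ModuleCat.of k N) p : Type) A).toLinearMap).comp
          (TensorProduct.map (ΔA k A) (LinearMap.id :
            ((pwr k A (ModuleCat.of k N) p : Type) ⊗[k] A) →ₗ[k] _))

/-- Right diagonal multiplication on the `A`-slots of `N ⊗ A^{⊗ p}` (counit on the base). -/
def rdiagE : (p : ℕ) →
    ((pwr k A (ModuleCat.of k N) p : Type) ⊗[k] A →ₗ[k] pwr k A (ModuleCat.of k N) p)
  | 0 => (TensorProduct.rid k N).toLinearMap.comp
      (TensorProduct.map (LinearMap.id : N →ₗ[k] N) (εA k A))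
  | p + 1 =>
      (TensorProduct.map (rdiagE p) (μA k A)).comp <|
        ((TensorProduct.tensorTensorTensorComm k
            (pwr k A (ModuleCat.of k N) p : Type) A A A).toLinearMap).comp
          (TensorProduct.map
            (LinearMap.id : ((pwr k A (ModuleCat.of k N) p : Type) ⊗[k] A) →ₗ[k] _) (ΔA k A))

/-- Right diagonal action on `N ⊗ A^{⊗ p}` built from a base (right) action `ωNr`. -/
def rdiagAct (ωNr : N ⊗[k] A →ₗ[k] N) : (p : ℕ) →
    ((pwr k A (ModuleCat.of k N) p : Type) ⊗[k] A →ₗ[k] pwr k A (ModuleCat.of k N) p)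
  | 0 => ωNr
  | p + 1 =>
      (TensorProduct.map (rdiagAct ωNr p) (μA k A)).comp <|
        ((TensorProduct.tensorTensorTensorComm k
            (pwr k A (ModuleCat.of k N) p : Type) A A A).toLinearMap).comp
          (TensorProduct.map
            (LinearMap.id : ((pwr k A (ModuleCat.of k N) p : Type) ⊗[k] A) →ₗ[k] _) (ΔA k A))

end NM

/-- `dL : A^{⊗ n} → A ⊗ A^{⊗ n}`, `a^1 ⊗ ⋯ ⊗ a^n ↦ Σ (a^1)_1 ⋯ (a^n)_1 ⊗ ((a^1)_2 ⊗ ⋯ ⊗ (a^n)_2)`. -/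
def dL : (n : ℕ) → ((Pk k A n : Type) →ₗ[k] A ⊗[k] (Pk k A n : Type))
  | 0 => (TensorProduct.map (Algebra.linearMap k A) (LinearMap.id : k →ₗ[k] k)).comp
      (TensorProduct.lid k k).symm.toLinearMap
  | n + 1 =>
      (TensorProduct.map (μA k A)
          (LinearMap.id : ((Pk k A n : Type) ⊗[k] A) →ₗ[k] _)).comp <|
        ((TensorProduct.tensorTensorTensorComm k A (Pk k A n : Type) A A).toLinearMap).comp
          (TensorProduct.map (dL n) (ΔA k A))

/-- `dR : A^{⊗ n} → A^{⊗ n} ⊗ A`, `a^1 ⊗ ⋯ ⊗ a^n ↦ Σ ((a^1)_1 ⊗ ⋯ ⊗ (a^n)_1) ⊗ (a^1)_2 ⋯ (a^n)_2`. -/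
def dR : (n : ℕ) → ((Pk k A n : Type) →ₗ[k] (Pk k A n : Type) ⊗[k] A)
  | 0 => (TensorProduct.map (LinearMap.id : k →ₗ[k] k) (Algebra.linearMap k A)).comp
      (TensorProduct.rid k k).symm.toLinearMap
  | n + 1 =>
      (TensorProduct.map
          (LinearMap.id : ((Pk k A n : Type) ⊗[k] A) →ₗ[k] _) (μA k A)).comp <|
        ((TensorProduct.tensorTensorTensorComm k (Pk k A n : Type) A A A).toLinearMap).comp
          (TensorProduct.map (dR n) (ΔA k A))

section Base

variable {N : Type} [AddCommGroup N] [Module k N]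

/-- Apply `ρN : N → N ⊗ A` to the base of `N ⊗ A^{⊗ p}`. -/
def rhoBase (ρN : N →ₗ[k] N ⊗[k] A) : (p : ℕ) →
    ((pwr k A (ModuleCat.of k N) p : Type) →ₗ[k] pwr k A (ModuleCat.of k (N ⊗[k] A)) p)
  | 0 => ρN
  | p + 1 => TensorProduct.map (rhoBase ρN p) (LinearMap.id : A →ₗ[k] A)

/-- Reinterpret `(N ⊗ A) ⊗ A^{⊗ p}` as `N ⊗ A^{⊗ (p+1)}`. -/
def shiftB : (p : ℕ) →
    ((pwr k A (ModuleCat.of k (N ⊗[k] A)) p : Type) ≃ₗ[k] pwr k A (ModuleCat.of k N) (p+1))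
  | 0 => LinearEquiv.refl k (N ⊗[k] A)
  | p + 1 => TensorProduct.congr (shiftB p) (LinearEquiv.refl k A)

/-- Multiply the `A`-component of the base `N ⊗ A` on the right by an element of `A`. -/
def rmulBase : (p : ℕ) →
    ((pwr k A (ModuleCat.of k (N ⊗[k] A)) p : Type) ⊗[k] A →ₗ[k]
      pwr k A (ModuleCat.of k (N ⊗[k] A)) p)
  | 0 => (TensorProduct.map (LinearMap.id : N →ₗ[k] N) (μA k A)).comp
      (TensorProduct.assoc k N A A).toLinearMap
  | p + 1 =>
      (TensorProduct.map (rmulBase p) (LinearMap.id : A →ₗ[k] A)).comp <|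
        ((TensorProduct.assoc k (pwr k A (ModuleCat.of k (N ⊗[k] A)) p : Type) A A).symm.toLinearMap).comp <|
          (TensorProduct.map
            (LinearMap.id : (pwr k A (ModuleCat.of k (N ⊗[k] A)) p : Type) →ₗ[k] _)
            (TensorProduct.comm k A A).toLinearMap).comp
            (TensorProduct.assoc k
              (pwr k A (ModuleCat.of k (N ⊗[k] A)) p : Type) A A).toLinearMap

/-- Apply the counit to the `A`-component of the base `N ⊗ A`. -/
def epsBase : (p : ℕ) →
    ((pwr k A (ModuleCat.of k (N ⊗[k] A)) p : Type) →ₗ[k] pwr k A (ModuleCat.of k N) p)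
  | 0 => (TensorProduct.rid k N).toLinearMap.comp
      (TensorProduct.map (LinearMap.id : N →ₗ[k] N) (εA k A))
  | p + 1 => TensorProduct.map (epsBase p) (LinearMap.id : A →ₗ[k] A)

/-- Apply `Δ` on the `i`-th `A`-slot (`1 ≤ i ≤ p`) of `N ⊗ A^{⊗ p}`; junk otherwise. -/
def comulAt : (p : ℕ) → (i : ℕ) →
    ((pwr k A (ModuleCat.of k N) p : Type) →ₗ[k] pwr k A (ModuleCat.of k N) (p+1))
  | 0, _ => 0
  | p + 1, i =>
      if i = p + 1 then
        ((TensorProduct.assoc k (pwr k A (ModuleCat.of k N) p : Type) A A).symm.toLinearMap).comp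
          (TensorProduct.map
            (LinearMap.id : (pwr k A (ModuleCat.of k N) p : Type) →ₗ[k] _) (ΔA k A))
      else
        TensorProduct.map (comulAt p i) (LinearMap.id : A →ₗ[k] A)

/-- Left coaction on `N ⊗ A^{⊗ p}` coming from a left coaction on the base. -/
def lcoBase (ρNl : N →ₗ[k] A ⊗[k] N) : (p : ℕ) →
    ((pwr k A (ModuleCat.of k N) p : Type) →ₗ[k]
      A ⊗[k] (pwr k A (ModuleCat.of k N) p : Type))
  | 0 => ρNl
  | p + 1 =>
      ((TensorProduct.assoc k A (pwr k A (ModuleCat.of k N) p : Type) A).toLinearMap).comp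
        (TensorProduct.map (lcoBase ρNl p) (LinearMap.id : A →ₗ[k] A))

end Base

section Bicomplex

variable {M N : Type} [AddCommGroup M] [Module k M] [AddCommGroup N] [Module k N]

/-- `A^{⊗ n} ⊗ M`, the domain of the `(n,p)` cochains. -/
abbrev Dm (M : Type) [AddCommGroup M] [Module k M] (n : ℕ) : Type :=
  (Pk k A n : Type) ⊗[k] M

/-- `N ⊗ A^{⊗ p}`. -/
abbrev Cd (N : Type) [AddCommGroup N] [Module k N] (p : ℕ) : Type :=
  (pwr k A (ModuleCat.of k N) p : Type)

/-- The space of `(n,p)` cochains `Hom(A^{⊗ n} ⊗ M, N ⊗ A^{⊗ p})`. -/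
abbrev Yc (M N : Type) [AddCommGroup M] [Module k M] [AddCommGroup N] [Module k N]
    (n p : ℕ) : Type := Dm k A M n →ₗ[k] Cd k A N p

variable (ωM : A ⊗[k] M →ₗ[k] M) (ρM : M →ₗ[k] M ⊗[k] A)
variable (ωN : A ⊗[k] N →ₗ[k] N) (ρN : N →ₗ[k] N ⊗[k] A)

/-- `b_0`: the face using the diagonal left action of `a^1` on `N ⊗ A^{⊗ p}`. -/
def face0 (n p : ℕ) (f : Yc k A M N n p) : Yc k A M N (n+1) p :=
  (ldiag k A ωN p).comp <|
    (TensorProduct.map (LinearMap.id : A →ₗ[k] A) f).comp <|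
      ((TensorProduct.assoc k A (Pk k A n : Type) M).toLinearMap).comp
        (TensorProduct.map (insP k A n).symm.toLinearMap (LinearMap.id : M →ₗ[k] M))

/-- `b_i`, `1 ≤ i ≤ n`: multiply the adjacent arguments `a^i a^{i+1}`. -/
def faceMid (n p : ℕ) (i : ℕ) (f : Yc k A M N n p) : Yc k A M N (n+1) p :=
  f.comp (TensorProduct.map (mulP k A n i) (LinearMap.id : M →ₗ[k] M))

/-- `b_{n+1}` in the Hopf-module case: `f(a^1 ⊗ ⋯ ⊗ a^n ⊗ a^{n+1}·m)`. -/
def faceLastH (n p : ℕ) (f : Yc k A M N n p) : Yc k A M N (n+1) p :=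
  f.comp <|
    (TensorProduct.map (LinearMap.id : (Pk k A n : Type) →ₗ[k] _) ωM).comp
      (TensorProduct.assoc k (Pk k A n : Type) A M).toLinearMap

/-- `b_{n+1}` in the Yetter-Drinfel'd case. -/
def faceLastYD (n p : ℕ) (f : Yc k A M N n p) : Yc k A M N (n+1) p :=
  (rdiagE k A p).comp <|
    ((TensorProduct.comm k A (Cd k A N p)).toLinearMap).comp <|
      (TensorProduct.map (LinearMap.id : A →ₗ[k] A)
        (f.comp (TensorProduct.map (LinearMap.id : (Pk k A n : Type) →ₗ[k] _) ωM))).comp <|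
        ((TensorProduct.leftComm k (Pk k A n : Type) A (A ⊗[k] M)).toLinearMap).comp <|
          (TensorProduct.map (LinearMap.id : (Pk k A n : Type) →ₗ[k] _)
            (TensorProduct.assoc k A A M).toLinearMap).comp <|
            ((TensorProduct.assoc k (Pk k A n : Type) (A ⊗[k] A) M).toLinearMap).comp
              (TensorProduct.map
                (TensorProduct.map (LinearMap.id : (Pk k A n : Type) →ₗ[k] _) (ΔA k A))
                (LinearMap.id : M →ₗ[k] M))

/-- The Yetter-Drinfel'd horizontal faces `b_i^{n,p}`, `0 ≤ i ≤ n+1`. -/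
def bYD (n p : ℕ) (i : ℕ) (f : Yc k A M N n p) : Yc k A M N (n+1) p :=
  if i = 0 then face0 k A ωN n p f
  else if i ≤ n then faceMid k A n p i f
  else faceLastYD k A ωM n p f

/-- The Hopf-module horizontal faces `b_i^{n,p}`, `0 ≤ i ≤ n+1`. -/
def bH (n p : ℕ) (i : ℕ) (f : Yc k A M N n p) : Yc k A M N (n+1) p :=
  if i = 0 then face0 k A ωN n p f
  else if i ≤ n then faceMid k A n p i f
  else faceLastH k A ωM n p f

/-- `c_0` in the Hopf-module case: apply `ρ_N` to the `N`-component of the output. -/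
def cof0H (n p : ℕ) (f : Yc k A M N n p) : Yc k A M N n (p+1) :=
  ((shiftB k A p).toLinearMap).comp ((rhoBase k A ρN p).comp f)

/-- `c_0` in the Yetter-Drinfel'd case. -/
def cof0YD (n p : ℕ) (f : Yc k A M N n p) : Yc k A M N n (p+1) :=
  ((shiftB k A p).toLinearMap).comp <|
    (rmulBase k A p).comp <|
      ((TensorProduct.comm k A
          (pwr k A (ModuleCat.of k (N ⊗[k] A)) p : Type)).toLinearMap).comp <|
        (TensorProduct.map (LinearMap.id : A →ₗ[k] A) ((rhoBase k A ρN p).comp f)).comp <|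
          ((TensorProduct.assoc k A (Pk k A n : Type) M).toLinearMap).comp
            (TensorProduct.map (dL k A n) (LinearMap.id : M →ₗ[k] M))

/-- `c_{p+1}`: uses the right comodule structure of `M`. -/
def cofLast (n p : ℕ) (f : Yc k A M N n p) : Yc k A M N n (p+1) :=
  (TensorProduct.map f (μA k A)).comp <|
    ((TensorProduct.tensorTensorTensorComm k (Pk k A n : Type) A M A).toLinearMap).comp
      (TensorProduct.map (dR k A n) ρM)

/-- The Yetter-Drinfel'd vertical cofaces `c_j^{n,p}`, `0 ≤ j ≤ p+1`. -/
def cYD (n p : ℕ) (j : ℕ) (f : Yc k A M N n p) : Yc k A M N n (p+1) :=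
  if j = 0 then cof0YD k A ρN n p f
  else if j ≤ p then (comulAt k A p j).comp f
  else cofLast k A ρM n p f

/-- The Hopf-module vertical cofaces `c_j^{n,p}`, `0 ≤ j ≤ p+1`. -/
def cH (n p : ℕ) (j : ℕ) (f : Yc k A M N n p) : Yc k A M N n (p+1) :=
  if j = 0 then cof0H k A ρN n p f
  else if j ≤ p then (comulAt k A p j).comp f
  else cofLast k A ρM n p f

/-- The horizontal differential (Yetter-Drinfel'd case). -/
def dmYD (n p : ℕ) (f : Yc k A M N n p) : Yc k A M N (n+1) p :=
  ∑ i ∈ Finset.range (n+2), ((-1 : ℤ)^i) • bYD k A ωM ωN n p i f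

/-- The vertical differential (Yetter-Drinfel'd case). -/
def dcYD (n p : ℕ) (f : Yc k A M N n p) : Yc k A M N n (p+1) :=
  ∑ j ∈ Finset.range (p+2), ((-1 : ℤ)^j) • cYD k A ρM ρN n p j f

/-- The horizontal differential (Hopf-module case). -/
def dmH (n p : ℕ) (f : Yc k A M N n p) : Yc k A M N (n+1) p :=
  ∑ i ∈ Finset.range (n+2), ((-1 : ℤ)^i) • bH k A ωM ωN n p i f

/-- The vertical differential (Hopf-module case). -/
def dcH (n p : ℕ) (f : Yc k A M N n p) : Yc k A M N n (p+1) :=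
  ∑ j ∈ Finset.range (p+2), ((-1 : ℤ)^j) • cH k A ρM ρN n p j f

end Bicomplex

section Structures

variable {M : Type} [AddCommGroup M] [Module k M]

/-- `(M, ωM)` is a left `A`-module. -/
def IsModule (ωM : A ⊗[k] M →ₗ[k] M) : Prop :=
  (∀ m : M, ωM ((1 : A) ⊗ₜ m) = m) ∧
  ∀ (a b : A) (m : M), ωM (a ⊗ₜ ωM (b ⊗ₜ m)) = ωM ((a * b) ⊗ₜ m)

/-- `(M, ρM)` is a right `A`-comodule. -/
def IsComodule (ρM : M →ₗ[k] M ⊗[k] A) : Prop :=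
  ((TensorProduct.rid k M).toLinearMap.comp
      ((TensorProduct.map (LinearMap.id : M →ₗ[k] M) (εA k A)).comp ρM) = LinearMap.id) ∧
  (TensorProduct.map ρM (LinearMap.id : A →ₗ[k] A)).comp ρM =
    ((TensorProduct.assoc k M A A).symm.toLinearMap).comp
      ((TensorProduct.map (LinearMap.id : M →ₗ[k] M) (ΔA k A)).comp ρM)

/-- The map `a ⊗ m ↦ Σ a_1·m_0 ⊗ a_2 m_1`. -/
def hopfRHS (ωM : A ⊗[k] M →ₗ[k] M) (ρM : M →ₗ[k] M ⊗[k] A) :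
    A ⊗[k] M →ₗ[k] M ⊗[k] A :=
  (TensorProduct.map ωM (μA k A)).comp <|
    ((TensorProduct.tensorTensorTensorComm k A A M A).toLinearMap).comp
      (TensorProduct.map (ΔA k A) ρM)

/-- The map `a ⊗ m ↦ Σ (a_2·m)_0 ⊗ (a_2·m)_1 a_1`. -/
def ydLHS (ωM : A ⊗[k] M →ₗ[k] M) (ρM : M →ₗ[k] M ⊗[k] A) :
    A ⊗[k] M →ₗ[k] M ⊗[k] A :=
  (TensorProduct.map (LinearMap.id : M →ₗ[k] M) (μA k A)).comp <|
    ((TensorProduct.assoc k M A A).toLinearMap).comp <|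
      ((TensorProduct.comm k A (M ⊗[k] A)).toLinearMap).comp <|
        (TensorProduct.map (LinearMap.id : A →ₗ[k] A) (ρM.comp ωM)).comp <|
          ((TensorProduct.assoc k A A M).toLinearMap).comp
            (TensorProduct.map (ΔA k A) (LinearMap.id : M →ₗ[k] M))

/-- `(M, ωM, ρM)` is a left-right Yetter-Drinfel'd module over `A`. -/
def IsYetterDrinfeld (ωM : A ⊗[k] M →ₗ[k] M) (ρM : M →ₗ[k] M ⊗[k] A) : Prop :=
  IsModule k A ωM ∧ IsComodule k A ρM ∧
    ydLHS k A ωM ρM = hopfRHS k A ωM ρM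

/-- `(M, ωM, ρM)` is a left-right Hopf module over `A`. -/
def IsHopfModule (ωM : A ⊗[k] M →ₗ[k] M) (ρM : M →ₗ[k] M ⊗[k] A) : Prop :=
  IsModule k A ωM ∧ IsComodule k A ρM ∧
    ρM.comp ωM = hopfRHS k A ωM ρM

end Structures

section Cocycles

variable (k : Type) [Field k] (A : Type) [Ring A] [Bialgebra k A]
variable {M N : Type} [AddCommGroup M] [Module k M] [AddCommGroup N] [Module k N]
variable (ωM : A ⊗[k] M →ₗ[k] M) (ρM : M →ₗ[k] M ⊗[k] A)
variable (ωN : A ⊗[k] N →ₗ[k] N) (ρN : N →ₗ[k] N ⊗[k] A)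

/-- First 1-cocycle condition:
`ω' ∘ (id ⊗ ω_M) + ω_N ∘ (id ⊗ ω') = ω' ∘ (μ ⊗ id)` (as maps `(A ⊗ A) ⊗ M → N`). -/
def Cocycle1 (ω' : A ⊗[k] M →ₗ[k] N) : Prop :=
  ω'.comp ((TensorProduct.map (LinearMap.id : A →ₗ[k] A) ωM).comp
      (TensorProduct.assoc k A A M).toLinearMap) +
    ωN.comp ((TensorProduct.map (LinearMap.id : A →ₗ[k] A) ω').comp
      (TensorProduct.assoc k A A M).toLinearMap) =
  ω'.comp (TensorProduct.map (μA k A) (LinearMap.id : M →ₗ[k] M))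

/-- Second 1-cocycle condition:
`(ρ' ⊗ id) ∘ ρ_M + (ρ_N ⊗ id) ∘ ρ' = (id ⊗ Δ) ∘ ρ'` (as maps `M → (N ⊗ A) ⊗ A`). -/
def Cocycle2 (ρ' : M →ₗ[k] N ⊗[k] A) : Prop :=
  (TensorProduct.map ρ' (LinearMap.id : A →ₗ[k] A)).comp ρM +
    (TensorProduct.map ρN (LinearMap.id : A →ₗ[k] A)).comp ρ' =
  ((TensorProduct.assoc k N A A).symm.toLinearMap).comp
    ((TensorProduct.map (LinearMap.id : N →ₗ[k] N) (ΔA k A)).comp ρ')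

/-- `a ⊗ m ↦ Σ ω(a_1 ⊗ m_0) ⊗ a_2 m_1`, i.e. `(ω ⊗ μ) ∘ (id ⊗ τ ⊗ id) ∘ (Δ ⊗ ρ)`. -/
def mixLHS (ω : A ⊗[k] M →ₗ[k] N) (ρ : M →ₗ[k] M ⊗[k] A) : A ⊗[k] M →ₗ[k] N ⊗[k] A :=
  (TensorProduct.map ω (μA k A)).comp <|
    ((TensorProduct.tensorTensorTensorComm k A A M A).toLinearMap).comp
      (TensorProduct.map (ΔA k A) ρ)

/-- `a ⊗ m ↦ Σ ω(a_1 ⊗ ρ'(m)-part)` : `(ω_N ⊗ μ) ∘ (id ⊗ τ_N ⊗ id) ∘ (Δ ⊗ ρ')`. -/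
def mixLHS' (ω : A ⊗[k] N →ₗ[k] N) (ρ' : M →ₗ[k] N ⊗[k] A) : A ⊗[k] M →ₗ[k] N ⊗[k] A :=
  (TensorProduct.map ω (μA k A)).comp <|
    ((TensorProduct.tensorTensorTensorComm k A A N A).toLinearMap).comp
      (TensorProduct.map (ΔA k A) ρ')

/-- `(id ⊗ μ) ∘ (ρ' ⊗ id) ∘ τ_M ∘ (id ⊗ ω) ∘ (Δ ⊗ id)`,
`a ⊗ m ↦ Σ ρ'(a_2·m)_0 ⊗ ρ'(a_2·m)_1 a_1`. -/
def mixRHS (ω : A ⊗[k] M →ₗ[k] M) (ρ' : M →ₗ[k] N ⊗[k] A) : A ⊗[k] M →ₗ[k] N ⊗[k] A :=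
  (TensorProduct.map (LinearMap.id : N →ₗ[k] N) (μA k A)).comp <|
    ((TensorProduct.assoc k N A A).toLinearMap).comp <|
      (TensorProduct.map ρ' (LinearMap.id : A →ₗ[k] A)).comp <|
        ((TensorProduct.comm k A M).toLinearMap).comp <|
          (TensorProduct.map (LinearMap.id : A →ₗ[k] A) ω).comp <|
            ((TensorProduct.assoc k A A M).toLinearMap).comp
              (TensorProduct.map (ΔA k A) (LinearMap.id : M →ₗ[k] M))

/-- `(id ⊗ μ) ∘ (ρ_N ⊗ id) ∘ τ_N ∘ (id ⊗ ω') ∘ (Δ ⊗ id)`. -/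
def mixRHS' (ω' : A ⊗[k] M →ₗ[k] N) (ρ : N →ₗ[k] N ⊗[k] A) : A ⊗[k] M →ₗ[k] N ⊗[k] A :=
  (TensorProduct.map (LinearMap.id : N →ₗ[k] N) (μA k A)).comp <|
    ((TensorProduct.assoc k N A A).toLinearMap).comp <|
      (TensorProduct.map ρ (LinearMap.id : A →ₗ[k] A)).comp <|
        ((TensorProduct.comm k A N).toLinearMap).comp <|
          (TensorProduct.map (LinearMap.id : A →ₗ[k] A) ω').comp <|
            ((TensorProduct.assoc k A A M).toLinearMap).comp
              (TensorProduct.map (ΔA k A) (LinearMap.id : M →ₗ[k] M))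

/-- Third 1-cocycle condition in the Yetter-Drinfel'd case. -/
def Cocycle3YD (ω' : A ⊗[k] M →ₗ[k] N) (ρ' : M →ₗ[k] N ⊗[k] A) : Prop :=
  mixLHS k A ω' ρM + mixLHS' k A ωN ρ' = mixRHS k A ωM ρ' + mixRHS' k A ω' ρN

/-- Third 1-cocycle condition in the Hopf-module case. -/
def Cocycle3H (ω' : A ⊗[k] M →ₗ[k] N) (ρ' : M →ₗ[k] N ⊗[k] A) : Prop :=
  mixLHS k A ω' ρM + mixLHS' k A ωN ρ' = ρ'.comp ωM + ρN.comp ω'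

/-- `Z^1(M,N)` for Yetter-Drinfel'd modules. -/
def Z1YD (ω' : A ⊗[k] M →ₗ[k] N) (ρ' : M →ₗ[k] N ⊗[k] A) : Prop :=
  Cocycle1 k A ωM ωN ω' ∧ Cocycle2 k A ρM ρN ρ' ∧ Cocycle3YD k A ωM ρM ωN ρN ω' ρ'

/-- `Z^1(M,N)` for Hopf modules. -/
def Z1H (ω' : A ⊗[k] M →ₗ[k] N) (ρ' : M →ₗ[k] N ⊗[k] A) : Prop :=
  Cocycle1 k A ωM ωN ω' ∧ Cocycle2 k A ρM ρN ρ' ∧ Cocycle3H k A ωM ρM ωN ρN ω' ρ'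

/-- `B^1(M,N)`: the pair is `(d_m(f), d_c(f))` for some `f : M → N`. -/
def B1 (ω' : A ⊗[k] M →ₗ[k] N) (ρ' : M →ₗ[k] N ⊗[k] A) : Prop :=
  ∃ f : M →ₗ[k] N,
    ω' = ωN.comp (TensorProduct.map (LinearMap.id : A →ₗ[k] A) f) - f.comp ωM ∧
    ρ' = ρN.comp f - (TensorProduct.map f (LinearMap.id : A →ₗ[k] A)).comp ρM

/-- The action of the extension `N ⊕_{(ω',ρ')} M`: `a·(n,m) = (a·n + ω'(a⊗m), a·m)`. -/
def sumAct (ω' : A ⊗[k] M →ₗ[k] N) : A ⊗[k] (N × M) →ₗ[k] N × M :=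
  LinearMap.prod
    (ωN.comp (TensorProduct.map (LinearMap.id : A →ₗ[k] A) (LinearMap.fst k N M)) +
      ω'.comp (TensorProduct.map (LinearMap.id : A →ₗ[k] A) (LinearMap.snd k N M)))
    (ωM.comp (TensorProduct.map (LinearMap.id : A →ₗ[k] A) (LinearMap.snd k N M)))

/-- The coaction of the extension `N ⊕_{(ω',ρ')} M`:
`λ(n,m) = ρ_N(n) + ρ'(m) + ρ_M(m)`. -/
def sumCo (ρ' : M →ₗ[k] N ⊗[k] A) : (N × M) →ₗ[k] (N × M) ⊗[k] A :=
  (TensorProduct.map (LinearMap.inl k N M) (LinearMap.id : A →ₗ[k] A)).comp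
      (ρN.comp (LinearMap.fst k N M)) +
    (TensorProduct.map (LinearMap.inl k N M) (LinearMap.id : A →ₗ[k] A)).comp
      (ρ'.comp (LinearMap.snd k N M)) +
    (TensorProduct.map (LinearMap.inr k N M) (LinearMap.id : A →ₗ[k] A)).comp
      (ρM.comp (LinearMap.snd k N M))

/-- A linear map is a morphism for the given module/comodule structures. -/
def IsBicompatHom {X Y : Type} [AddCommGroup X] [Module k X] [AddCommGroup Y] [Module k Y]
    (ωX : A ⊗[k] X →ₗ[k] X) (ρX : X →ₗ[k] X ⊗[k] A)
    (ωY : A ⊗[k] Y →ₗ[k] Y) (ρY : Y →ₗ[k] Y ⊗[k] A) (f : X →ₗ[k] Y) : Prop :=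
  f.comp ωX = ωY.comp (TensorProduct.map (LinearMap.id : A →ₗ[k] A) f) ∧
    ρY.comp f = (TensorProduct.map f (LinearMap.id : A →ₗ[k] A)).comp ρX

end Cocycles

/-!
A short exact sequence `0 → N → E → M → 0` of Yetter-Drinfel'd modules splits as a sequence of
vector spaces, so `E ≅ N × M` linearly. Transported to `N × M`, the action and coaction of `E` are
forced to be triangular by the requirement that `N → E` and `E → M` be morphisms: they are those of
`N ⊕_{(ω',ρ')} M`, where `(ω', ρ')` are their off-diagonal components.

Conversely, for triangular structure maps on `N × M` the module, comodule and Yetter-Drinfel'd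
axioms hold on the summand `N` because they hold in `N`. On the summand `M` their `M`-components
are the axioms of `M`, and their `N`-components amount to the three cocycle conditions (the unit and
counit axioms only add `ω' (1 ⊗ m) = 0` and `ε ∘ ρ' = 0`, which follow from the first two).
-/

section MixingMaps

open LinearMap

variable {k : Type*} [CommSemiring k] {A : Type*} [Semiring A] [Bialgebra k A]
variable {X Y W X' Y' W' : Type*} [AddCommMonoid X] [Module k X] [AddCommMonoid Y] [Module k Y]
  [AddCommMonoid W] [Module k W] [AddCommMonoid X'] [Module k X'] [AddCommMonoid Y'] [Module k Y']
  [AddCommMonoid W'] [Module k W']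

variable (k A X) in
def counitRight : X ⊗[k] A →ₗ[k] X :=
  (TensorProduct.rid k X).toLinearMap ∘ₗ lTensor X Coalgebra.counit

variable (k A X) in
def comulRight : X ⊗[k] A →ₗ[k] (X ⊗[k] A) ⊗[k] A :=
  (TensorProduct.assoc k X A A).symm.toLinearMap ∘ₗ lTensor X Coalgebra.comul

/-- `a ⊗ x ↦ Σ ω(a₁ ⊗ ρ(x)₀) ⊗ a₂ ρ(x)₁`, the right-hand side of the Yetter-Drinfel'd condition. -/
def hopfMix (ω : A ⊗[k] W →ₗ[k] Y) (ρ : X →ₗ[k] W ⊗[k] A) : A ⊗[k] X →ₗ[k] Y ⊗[k] A :=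
  map ω (mul' k A) ∘ₗ (tensorTensorTensorComm k A A W A).toLinearMap ∘ₗ map Coalgebra.comul ρ

/-- `a ⊗ x ↦ Σ f(a₂ ⊗ x)₀ ⊗ f(a₂ ⊗ x)₁ a₁`; with `f = ρ ∘ ω` this is the left-hand side of the
Yetter-Drinfel'd condition. -/
def ydMix (f : A ⊗[k] X →ₗ[k] Y ⊗[k] A) : A ⊗[k] X →ₗ[k] Y ⊗[k] A :=
  lTensor Y (mul' k A) ∘ₗ (TensorProduct.assoc k Y A A).toLinearMap ∘ₗ
    (TensorProduct.comm k A (Y ⊗[k] A)).toLinearMap ∘ₗ lTensor A f ∘ₗ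
      (TensorProduct.assoc k A A X).toLinearMap ∘ₗ rTensor X Coalgebra.comul

lemma ydMix_add (f g : A ⊗[k] X →ₗ[k] Y ⊗[k] A) : ydMix (f + g) = ydMix f + ydMix g := by
  simp only [ydMix, lTensor_add, add_comp, comp_add]

lemma ydMix_comp_lTensor (f : A ⊗[k] X →ₗ[k] Y ⊗[k] A) (g : X' →ₗ[k] X) :
    ydMix (f ∘ₗ lTensor A g) = ydMix f ∘ₗ lTensor A g := by
  refine TensorProduct.ext' fun a x => ?_
  simp only [ydMix, comp_apply, lTensor_tmul, rTensor_tmul]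
  induction Coalgebra.comul (R := k) a using TensorProduct.induction_on with
  | zero => simp
  | tmul a₁ a₂ => simp
  | add s t hs ht => simp only [add_tmul, map_add, hs, ht]

lemma ydMix_rTensor_comp (h : Y →ₗ[k] Y') (f : A ⊗[k] X →ₗ[k] Y ⊗[k] A) :
    ydMix (rTensor A h ∘ₗ f) = rTensor A h ∘ₗ ydMix f := by
  refine TensorProduct.ext' fun a x => ?_
  simp only [ydMix, comp_apply, rTensor_tmul]
  induction Coalgebra.comul (R := k) a using TensorProduct.induction_on with
  | zero => simp
  | tmul a₁ a₂ =>
    simp only [LinearEquiv.coe_coe, TensorProduct.assoc_tmul, lTensor_tmul, comp_apply]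
    induction f (a₂ ⊗ₜ[k] x) using TensorProduct.induction_on with
    | zero => simp
    | tmul y c => simp
    | add u v hu hv => simp only [map_add, tmul_add, hu, hv]
  | add s t hs ht => simp only [add_tmul, map_add, hs, ht]

lemma hopfMix_add_left (ω₁ ω₂ : A ⊗[k] W →ₗ[k] Y) (ρ : X →ₗ[k] W ⊗[k] A) :
    hopfMix (ω₁ + ω₂) ρ = hopfMix ω₁ ρ + hopfMix ω₂ ρ := by
  simp only [hopfMix, TensorProduct.map_add_left, add_comp]

lemma hopfMix_add_right (ω : A ⊗[k] W →ₗ[k] Y) (ρ₁ ρ₂ : X →ₗ[k] W ⊗[k] A) :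
    hopfMix ω (ρ₁ + ρ₂) = hopfMix ω ρ₁ + hopfMix ω ρ₂ := by
  simp only [hopfMix, TensorProduct.map_add_right, comp_add]

lemma hopfMix_comp_right (ω : A ⊗[k] W →ₗ[k] Y) (ρ : X →ₗ[k] W ⊗[k] A) (g : X' →ₗ[k] X) :
    hopfMix ω (ρ ∘ₗ g) = hopfMix ω ρ ∘ₗ lTensor A g := by
  refine TensorProduct.ext' fun a x => ?_
  simp [hopfMix]

lemma hopfMix_comp_left (h : Y →ₗ[k] Y') (ω : A ⊗[k] W →ₗ[k] Y) (ρ : X →ₗ[k] W ⊗[k] A) :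
    hopfMix (h ∘ₗ ω) ρ = rTensor A h ∘ₗ hopfMix ω ρ := by
  refine TensorProduct.ext' fun a x => ?_
  simp only [hopfMix, comp_apply, map_tmul]
  induction Coalgebra.comul (R := k) a using TensorProduct.induction_on with
  | zero => simp
  | tmul a₁ a₂ =>
    induction ρ x using TensorProduct.induction_on with
    | zero => simp
    | tmul w c => simp
    | add u v hu hv => simp only [map_add, tmul_add, hu, hv]
  | add s t hs ht => simp only [add_tmul, map_add, hs, ht]

lemma hopfMix_comp_lTensor (ω : A ⊗[k] W →ₗ[k] Y) (g : W' →ₗ[k] W) (ρ : X →ₗ[k] W' ⊗[k] A) :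
    hopfMix (ω ∘ₗ lTensor A g) ρ = hopfMix ω (rTensor A g ∘ₗ ρ) := by
  refine TensorProduct.ext' fun a x => ?_
  simp only [hopfMix, comp_apply, map_tmul]
  induction Coalgebra.comul (R := k) a using TensorProduct.induction_on with
  | zero => simp
  | tmul a₁ a₂ =>
    induction ρ x using TensorProduct.induction_on with
    | zero => simp
    | tmul w c => simp
    | add u v hu hv => simp only [map_add, tmul_add, hu, hv]
  | add s t hs ht => simp only [add_tmul, map_add, hs, ht]

lemma comulRight_comp_rTensor (f : X →ₗ[k] Y) :
    comulRight k A Y ∘ₗ rTensor A f = rTensor A (rTensor A f) ∘ₗ comulRight k A X := by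
  refine TensorProduct.ext' fun x a => ?_
  simp only [comulRight, comp_apply, rTensor_tmul, lTensor_tmul]
  induction Coalgebra.comul (R := k) a using TensorProduct.induction_on with
  | zero => simp
  | tmul a₁ a₂ => simp
  | add s t hs ht => simp only [tmul_add, map_add, hs, ht]

lemma counitRight_comp_rTensor (f : X →ₗ[k] Y) :
    counitRight k A Y ∘ₗ rTensor A f = f ∘ₗ counitRight k A X := by
  ext x a
  simp [counitRight]

lemma rTensor_counitRight_comp_comulRight :
    rTensor A (counitRight k A X) ∘ₗ comulRight k A X = LinearMap.id := by
  refine TensorProduct.ext' fun x a => ?_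
  have key (t : A ⊗[k] A) : rTensor A (counitRight k A X) ((TensorProduct.assoc k X A A).symm
      (x ⊗ₜ t)) = x ⊗ₜ TensorProduct.lid k A (rTensor A Coalgebra.counit t) := by
    induction t using TensorProduct.induction_on with
    | zero => simp
    | tmul a₁ a₂ => simp [counitRight, TensorProduct.smul_tmul']
    | add s t hs ht => simp only [tmul_add, map_add, hs, ht]
  simp [comulRight, key, Coalgebra.rTensor_counit_comul]

lemma lTensor_prod_ext {Q M N P : Type*} [AddCommMonoid Q]
    [Module k Q] [AddCommMonoid M] [Module k M] [AddCommMonoid N] [Module k N] [AddCommMonoid P]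
    [Module k P] {f g : Q ⊗[k] (N × M) →ₗ[k] P}
    (hl : f ∘ₗ lTensor Q (inl k N M) = g ∘ₗ lTensor Q (inl k N M))
    (hr : f ∘ₗ lTensor Q (inr k N M) = g ∘ₗ lTensor Q (inr k N M)) : f = g := by
  refine TensorProduct.ext' fun q x => ?_
  have hx : q ⊗ₜ[k] x = lTensor Q (inl k N M) (q ⊗ₜ x.1) + lTensor Q (inr k N M) (q ⊗ₜ x.2) := by
    simp [← TensorProduct.tmul_add]
  rw [hx, map_add, map_add]
  exact congr($hl (q ⊗ₜ x.1) + $hr (q ⊗ₜ x.2))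

end MixingMaps

section Morphisms

open LinearMap

variable {k : Type} [Field k] {A : Type} [Ring A] [Bialgebra k A]
variable {X Y Z : Type} [AddCommGroup X] [Module k X] [AddCommGroup Y] [Module k Y]
  [AddCommGroup Z] [Module k Z]
variable {ωX : A ⊗[k] X →ₗ[k] X} {ρX : X →ₗ[k] X ⊗[k] A} {ωY : A ⊗[k] Y →ₗ[k] Y}
  {ρY : Y →ₗ[k] Y ⊗[k] A} {ωZ : A ⊗[k] Z →ₗ[k] Z} {ρZ : Z →ₗ[k] Z ⊗[k] A}

lemma ydLHS_eq_ydMix (ω : A ⊗[k] X →ₗ[k] X) (ρ : X →ₗ[k] X ⊗[k] A) :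
    ydLHS k A ω ρ = ydMix (ρ ∘ₗ ω) := rfl

lemma hopfRHS_eq_hopfMix (ω : A ⊗[k] X →ₗ[k] X) (ρ : X →ₗ[k] X ⊗[k] A) :
    hopfRHS k A ω ρ = hopfMix ω ρ := rfl

lemma isComodule_iff (ρ : X →ₗ[k] X ⊗[k] A) :
    IsComodule k A ρ ↔
      counitRight k A X ∘ₗ ρ = LinearMap.id ∧ rTensor A ρ ∘ₗ ρ = comulRight k A X ∘ₗ ρ := Iff.rfl

lemma isBicompatHom_iff (f : X →ₗ[k] Y) :
    IsBicompatHom k A ωX ρX ωY ρY f ↔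
      f ∘ₗ ωX = ωY ∘ₗ lTensor A f ∧ ρY ∘ₗ f = rTensor A f ∘ₗ ρX := Iff.rfl

lemma IsBicompatHom.comp {g : Y →ₗ[k] Z} {f : X →ₗ[k] Y}
    (hg : IsBicompatHom k A ωY ρY ωZ ρZ g) (hf : IsBicompatHom k A ωX ρX ωY ρY f) :
    IsBicompatHom k A ωX ρX ωZ ρZ (g ∘ₗ f) := by
  rw [isBicompatHom_iff] at hf hg ⊢
  constructor
  · rw [comp_assoc, hf.1, ← comp_assoc, hg.1, comp_assoc, ← lTensor_comp]
  · rw [← comp_assoc, hg.2, comp_assoc, hf.2, ← comp_assoc, ← rTensor_comp]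

lemma ydLHS_comp_lTensor {f : X →ₗ[k] Y} (hf : IsBicompatHom k A ωX ρX ωY ρY f) :
    ydLHS k A ωY ρY ∘ₗ lTensor A f = rTensor A f ∘ₗ ydLHS k A ωX ρX := by
  obtain ⟨hω, hρ⟩ := (isBicompatHom_iff f).1 hf
  rw [ydLHS_eq_ydMix, ydLHS_eq_ydMix, ← ydMix_comp_lTensor, comp_assoc, ← hω, ← comp_assoc, hρ,
    comp_assoc, ydMix_rTensor_comp]

lemma hopfRHS_comp_lTensor {f : X →ₗ[k] Y} (hf : IsBicompatHom k A ωX ρX ωY ρY f) :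
    hopfRHS k A ωY ρY ∘ₗ lTensor A f = rTensor A f ∘ₗ hopfRHS k A ωX ρX := by
  obtain ⟨hω, hρ⟩ := (isBicompatHom_iff f).1 hf
  rw [hopfRHS_eq_hopfMix, hopfRHS_eq_hopfMix, ← hopfMix_comp_right, hρ, ← hopfMix_comp_lTensor,
    ← hω, hopfMix_comp_left]

lemma isBicompatHom_transport (φ : X ≃ₗ[k] Y) (ω : A ⊗[k] X →ₗ[k] X)
    (ρ : X →ₗ[k] X ⊗[k] A) :
    IsBicompatHom k A ω ρ (φ.toLinearMap ∘ₗ ω ∘ₗ lTensor A φ.symm.toLinearMap)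
      (rTensor A φ.toLinearMap ∘ₗ ρ ∘ₗ φ.symm.toLinearMap) φ.toLinearMap := by
  refine (isBicompatHom_iff _).2 ⟨TensorProduct.ext' fun a x => ?_, LinearMap.ext fun x => ?_⟩ <;>
    simp

lemma isBicompatHom_transport_symm (φ : X ≃ₗ[k] Y) (ω : A ⊗[k] X →ₗ[k] X)
    (ρ : X →ₗ[k] X ⊗[k] A) :
    IsBicompatHom k A (φ.toLinearMap ∘ₗ ω ∘ₗ lTensor A φ.symm.toLinearMap)
      (rTensor A φ.toLinearMap ∘ₗ ρ ∘ₗ φ.symm.toLinearMap) ω ρ φ.symm.toLinearMap := by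
  refine (isBicompatHom_iff _).2 ⟨TensorProduct.ext' fun a x => ?_, LinearMap.ext fun x => ?_⟩
  · simp
  · simp [← rTensor_comp_apply]

lemma IsYetterDrinfeld.of_surjective {f : X →ₗ[k] Y} (hf : IsBicompatHom k A ωX ρX ωY ρY f)
    (hsurj : Function.Surjective f) (hX : IsYetterDrinfeld k A ωX ρX) :
    IsYetterDrinfeld k A ωY ρY := by
  obtain ⟨⟨hunit, hmul⟩, hco, hyd⟩ := hX
  obtain ⟨hcounit, hcoassoc⟩ := (isComodule_iff ρX).1 hco
  obtain ⟨hω, hρ⟩ := (isBicompatHom_iff f).1 hf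
  have hωf (a : A) (x : X) : ωY (a ⊗ₜ f x) = f (ωX (a ⊗ₜ x)) := congr($hω (a ⊗ₜ x)).symm
  refine ⟨⟨fun y => ?_, fun a b y => ?_⟩, (isComodule_iff ρY).2 ⟨?_, ?_⟩, ?_⟩
  · obtain ⟨x, rfl⟩ := hsurj y
    rw [hωf, hunit]
  · obtain ⟨x, rfl⟩ := hsurj y
    rw [hωf, hωf, hωf, hmul]
  · rw [← cancel_right hsurj, comp_assoc, hρ, ← comp_assoc, counitRight_comp_rTensor, comp_assoc,
      hcounit, id_comp, comp_id]
  · rw [← cancel_right hsurj, comp_assoc, comp_assoc, hρ, ← comp_assoc, ← rTensor_comp, hρ,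
      rTensor_comp, comp_assoc, hcoassoc, ← comp_assoc, ← comulRight_comp_rTensor, comp_assoc]
  · rw [← cancel_right (lTensor_surjective A hsurj), ydLHS_comp_lTensor hf,
      hopfRHS_comp_lTensor hf, hyd]

end Morphisms

section SumStructure

open LinearMap

variable {k : Type} [Field k] {A : Type} [Ring A] [Bialgebra k A]
variable {M N : Type} [AddCommGroup M] [Module k M] [AddCommGroup N] [Module k N]
variable (ωM : A ⊗[k] M →ₗ[k] M) (ρM : M →ₗ[k] M ⊗[k] A)
variable (ωN : A ⊗[k] N →ₗ[k] N) (ρN : N →ₗ[k] N ⊗[k] A)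
variable (ω' : A ⊗[k] M →ₗ[k] N) (ρ' : M →ₗ[k] N ⊗[k] A)

@[simp]
lemma sumAct_tmul (a : A) (x : N × M) :
    sumAct k A ωM ωN ω' (a ⊗ₜ x) = (ωN (a ⊗ₜ x.1) + ω' (a ⊗ₜ x.2), ωM (a ⊗ₜ x.2)) := by
  simp [sumAct]

lemma sumAct_comp_lTensor_inl : sumAct k A ωM ωN ω' ∘ₗ lTensor A (inl k N M) = inl k N M ∘ₗ ωN :=
  TensorProduct.ext' fun a n => by simp

lemma sumAct_comp_lTensor_inr :
    sumAct k A ωM ωN ω' ∘ₗ lTensor A (inr k N M) = inl k N M ∘ₗ ω' + inr k N M ∘ₗ ωM :=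
  TensorProduct.ext' fun a m => by simp

lemma snd_comp_sumAct : snd k N M ∘ₗ sumAct k A ωM ωN ω' = ωM ∘ₗ lTensor A (snd k N M) :=
  TensorProduct.ext' fun a x => by simp

lemma sumCo_comp_inl : sumCo k A ρM ρN ρ' ∘ₗ inl k N M = rTensor A (inl k N M) ∘ₗ ρN := by
  ext n; simp [sumCo, rTensor]

lemma sumCo_comp_inr :
    sumCo k A ρM ρN ρ' ∘ₗ inr k N M =
      rTensor A (inl k N M) ∘ₗ ρ' + rTensor A (inr k N M) ∘ₗ ρM := by
  ext m; simp [sumCo, rTensor]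

lemma rTensor_snd_comp_sumCo : rTensor A (snd k N M) ∘ₗ sumCo k A ρM ρN ρ' = ρM ∘ₗ snd k N M := by
  refine prod_ext ?_ ?_
  · rw [comp_assoc, sumCo_comp_inl, ← comp_assoc, ← rTensor_comp, snd_comp_inl, rTensor_zero,
      zero_comp, comp_assoc, snd_comp_inl, comp_zero]
  · rw [comp_assoc, sumCo_comp_inr, comp_add, ← comp_assoc, ← comp_assoc, ← rTensor_comp,
      ← rTensor_comp, snd_comp_inl, snd_comp_inr, rTensor_zero, rTensor_id, zero_comp, zero_add,
      id_comp, comp_assoc, snd_comp_inr, comp_id]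

lemma rTensor_sumCo_comp_sumCo_comp_inl :
    (rTensor A (sumCo k A ρM ρN ρ') ∘ₗ sumCo k A ρM ρN ρ') ∘ₗ inl k N M =
      rTensor A (rTensor A (inl k N M)) ∘ₗ rTensor A ρN ∘ₗ ρN := by
  rw [comp_assoc, sumCo_comp_inl, ← comp_assoc, ← rTensor_comp, sumCo_comp_inl, rTensor_comp,
    comp_assoc]

lemma rTensor_sumCo_comp_sumCo_comp_inr :
    (rTensor A (sumCo k A ρM ρN ρ') ∘ₗ sumCo k A ρM ρN ρ') ∘ₗ inr k N M =
      rTensor A (rTensor A (inl k N M)) ∘ₗ (rTensor A ρ' ∘ₗ ρM + rTensor A ρN ∘ₗ ρ') +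
        rTensor A (rTensor A (inr k N M)) ∘ₗ rTensor A ρM ∘ₗ ρM := by
  rw [comp_assoc, sumCo_comp_inr, comp_add, ← comp_assoc, ← comp_assoc, ← rTensor_comp,
    ← rTensor_comp, sumCo_comp_inl, sumCo_comp_inr, rTensor_add, add_comp, rTensor_comp,
    rTensor_comp, rTensor_comp, comp_add]
  simp only [comp_assoc]
  abel

lemma comulRight_comp_sumCo_comp_inl :
    (comulRight k A _ ∘ₗ sumCo k A ρM ρN ρ') ∘ₗ inl k N M =
      rTensor A (rTensor A (inl k N M)) ∘ₗ comulRight k A N ∘ₗ ρN := by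
  rw [comp_assoc, sumCo_comp_inl, ← comp_assoc, comulRight_comp_rTensor, comp_assoc]

lemma comulRight_comp_sumCo_comp_inr :
    (comulRight k A _ ∘ₗ sumCo k A ρM ρN ρ') ∘ₗ inr k N M =
      rTensor A (rTensor A (inl k N M)) ∘ₗ comulRight k A N ∘ₗ ρ' +
        rTensor A (rTensor A (inr k N M)) ∘ₗ comulRight k A M ∘ₗ ρM := by
  rw [comp_assoc, sumCo_comp_inr, comp_add, ← comp_assoc, ← comp_assoc, comulRight_comp_rTensor,
    comulRight_comp_rTensor, comp_assoc, comp_assoc]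

lemma isBicompatHom_inl :
    IsBicompatHom k A ωN ρN (sumAct k A ωM ωN ω') (sumCo k A ρM ρN ρ') (inl k N M) :=
  (isBicompatHom_iff _).2 ⟨(sumAct_comp_lTensor_inl ωM ωN ω').symm, sumCo_comp_inl ρM ρN ρ'⟩

lemma isBicompatHom_snd :
    IsBicompatHom k A (sumAct k A ωM ωN ω') (sumCo k A ρM ρN ρ') ωM ρM (snd k N M) :=
  (isBicompatHom_iff _).2 ⟨snd_comp_sumAct ωM ωN ω', (rTensor_snd_comp_sumCo ρM ρN ρ').symm⟩

end SumStructure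

section SumCocycle

open LinearMap

variable {k : Type} [Field k] {A : Type} [Ring A] [Bialgebra k A]
variable {M N : Type} [AddCommGroup M] [Module k M] [AddCommGroup N] [Module k N]
variable {ωM : A ⊗[k] M →ₗ[k] M} {ρM : M →ₗ[k] M ⊗[k] A}
variable {ωN : A ⊗[k] N →ₗ[k] N} {ρN : N →ₗ[k] N ⊗[k] A}
variable {ω' : A ⊗[k] M →ₗ[k] N} {ρ' : M →ₗ[k] N ⊗[k] A}

lemma cocycle1_iff : Cocycle1 k A ωM ωN ω' ↔
    ∀ (a b : A) (m : M), ω' (a ⊗ₜ ωM (b ⊗ₜ m)) + ωN (a ⊗ₜ ω' (b ⊗ₜ m)) = ω' ((a * b) ⊗ₜ m) := by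
  refine ⟨fun h a b m => by simpa using congr($h ((a ⊗ₜ b) ⊗ₜ m)), fun h => ?_⟩
  exact TensorProduct.ext_threefold fun a b m => by simpa using h a b m

lemma isModule_sumAct_iff (hM : IsModule k A ωM) (hN : IsModule k A ωN) :
    IsModule k A (sumAct k A ωM ωN ω') ↔ Cocycle1 k A ωM ωN ω' := by
  rw [cocycle1_iff]
  refine ⟨fun h a b m => ?_, fun h => ⟨fun x => ?_, fun a b x => ?_⟩⟩
  · simpa [add_comm] using congr(($(h.2 a b (0, m))).1)
  · have h₁ : ω' (1 ⊗ₜ x.2) = 0 := by simpa [hM.1, hN.1] using h 1 1 x.2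
    simp [h₁, hN.1, hM.1]
  · ext
    · simp only [sumAct_tmul, TensorProduct.tmul_add, map_add, hN.2, ← h a b x.2]
      abel
    · simp [hM.2]

lemma cocycle2_iff : Cocycle2 k A ρM ρN ρ' ↔
    rTensor A ρ' ∘ₗ ρM + rTensor A ρN ∘ₗ ρ' = comulRight k A N ∘ₗ ρ' := Iff.rfl

lemma counitRight_comp_eq_zero_of_cocycle2 (hM : counitRight k A M ∘ₗ ρM = LinearMap.id)
    (hN : counitRight k A N ∘ₗ ρN = LinearMap.id) (h : Cocycle2 k A ρM ρN ρ') :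
    counitRight k A N ∘ₗ ρ' = 0 := by
  have h₀ : rTensor A (counitRight k A N ∘ₗ ρ') ∘ₗ ρM = 0 := by
    have := congr(rTensor A (counitRight k A N) ∘ₗ $(cocycle2_iff.1 h))
    rwa [comp_add, ← comp_assoc, ← comp_assoc, ← comp_assoc, ← rTensor_comp, ← rTensor_comp, hN,
      rTensor_id, id_comp, rTensor_counitRight_comp_comulRight, id_comp, add_eq_right] at this
  calc counitRight k A N ∘ₗ ρ' = (counitRight k A N ∘ₗ ρ') ∘ₗ counitRight k A M ∘ₗ ρM := by
        rw [hM, comp_id]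
    _ = counitRight k A N ∘ₗ rTensor A (counitRight k A N ∘ₗ ρ') ∘ₗ ρM := by
        rw [← comp_assoc, ← counitRight_comp_rTensor, comp_assoc]
    _ = 0 := by rw [h₀, comp_zero]

lemma isComodule_sumCo_iff (hM : IsComodule k A ρM) (hN : IsComodule k A ρN) :
    IsComodule k A (sumCo k A ρM ρN ρ') ↔ Cocycle2 k A ρM ρN ρ' := by
  obtain ⟨hMc, hMa⟩ := (isComodule_iff ρM).1 hM
  obtain ⟨hNc, hNa⟩ := (isComodule_iff ρN).1 hN
  rw [isComodule_iff, cocycle2_iff]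
  constructor
  · rintro ⟨-, h⟩
    have := congr(rTensor A (rTensor A (fst k N M)) ∘ₗ $h ∘ₗ inr k N M)
    rw [rTensor_sumCo_comp_sumCo_comp_inr, comulRight_comp_sumCo_comp_inr] at this
    simpa only [comp_add, ← comp_assoc, ← rTensor_comp, fst_comp_inl, fst_comp_inr, rTensor_id,
      rTensor_zero, id_comp, zero_comp, add_zero] using this
  · intro h
    refine ⟨prod_ext ?_ ?_, prod_ext ?_ ?_⟩
    · rw [comp_assoc, sumCo_comp_inl, ← comp_assoc, counitRight_comp_rTensor, comp_assoc, hNc,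
        id_comp, comp_id]
    · rw [comp_assoc, sumCo_comp_inr, comp_add, ← comp_assoc, ← comp_assoc,
        counitRight_comp_rTensor, counitRight_comp_rTensor, comp_assoc, comp_assoc, hMc,
        counitRight_comp_eq_zero_of_cocycle2 hMc hNc h, comp_zero, zero_add, comp_id, id_comp]
    · rw [rTensor_sumCo_comp_sumCo_comp_inl, comulRight_comp_sumCo_comp_inl, hNa]
    · rw [rTensor_sumCo_comp_sumCo_comp_inr, comulRight_comp_sumCo_comp_inr, hMa, h]

lemma mixRHS'_eq_ydMix {P : Type} [AddCommGroup P] [Module k P] (g : A ⊗[k] P →ₗ[k] N)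
    (ρ : N →ₗ[k] N ⊗[k] A) : mixRHS' k A g ρ = ydMix (ρ ∘ₗ g) := by
  refine TensorProduct.ext' fun a x => ?_
  simp only [mixRHS', ydMix, comp_apply, map_tmul, rTensor_tmul, id_apply]
  induction Coalgebra.comul (R := k) a using TensorProduct.induction_on with
  | zero => simp
  | tmul a₁ a₂ => simp [lTensor]
  | add s t hs ht => simp only [add_tmul, map_add, hs, ht]

lemma mixRHS_eq_ydMix (ω : A ⊗[k] M →ₗ[k] M) (ρ : M →ₗ[k] N ⊗[k] A) :
    mixRHS k A ω ρ = ydMix (ρ ∘ₗ ω) := by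
  refine TensorProduct.ext' fun a x => ?_
  simp only [mixRHS, ydMix, comp_apply, map_tmul, rTensor_tmul, id_apply]
  induction Coalgebra.comul (R := k) a using TensorProduct.induction_on with
  | zero => simp
  | tmul a₁ a₂ => simp [lTensor]
  | add s t hs ht => simp only [add_tmul, map_add, hs, ht]

lemma cocycle3YD_iff : Cocycle3YD k A ωM ρM ωN ρN ω' ρ' ↔
    hopfMix ω' ρM + hopfMix ωN ρ' = ydMix (ρ' ∘ₗ ωM) + ydMix (ρN ∘ₗ ω') := by
  rw [Cocycle3YD, mixRHS_eq_ydMix, mixRHS'_eq_ydMix]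
  rfl

lemma ydLHS_sum_comp_lTensor_inr :
    ydLHS k A (sumAct k A ωM ωN ω') (sumCo k A ρM ρN ρ') ∘ₗ lTensor A (inr k N M) =
      rTensor A (inl k N M) ∘ₗ (ydMix (ρ' ∘ₗ ωM) + ydMix (ρN ∘ₗ ω')) +
        rTensor A (inr k N M) ∘ₗ ydLHS k A ωM ρM := by
  rw [ydLHS_eq_ydMix, ydLHS_eq_ydMix, ← ydMix_comp_lTensor, comp_assoc, sumAct_comp_lTensor_inr,
    comp_add, ← comp_assoc, ← comp_assoc, sumCo_comp_inl, sumCo_comp_inr]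
  simp only [add_comp, comp_assoc, ydMix_add, ydMix_rTensor_comp, comp_add]
  abel

lemma hopfRHS_sum_comp_lTensor_inr :
    hopfRHS k A (sumAct k A ωM ωN ω') (sumCo k A ρM ρN ρ') ∘ₗ lTensor A (inr k N M) =
      rTensor A (inl k N M) ∘ₗ (hopfMix ω' ρM + hopfMix ωN ρ') +
        rTensor A (inr k N M) ∘ₗ hopfRHS k A ωM ρM := by
  rw [hopfRHS_eq_hopfMix, hopfRHS_eq_hopfMix, ← hopfMix_comp_right, sumCo_comp_inr,
    hopfMix_add_right, ← hopfMix_comp_lTensor, ← hopfMix_comp_lTensor, sumAct_comp_lTensor_inl,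
    sumAct_comp_lTensor_inr, hopfMix_add_left]
  simp only [hopfMix_comp_left, comp_add]
  abel

lemma ydLHS_sum_eq_hopfRHS_sum_iff (hM : ydLHS k A ωM ρM = hopfRHS k A ωM ρM)
    (hN : ydLHS k A ωN ρN = hopfRHS k A ωN ρN) :
    ydLHS k A (sumAct k A ωM ωN ω') (sumCo k A ρM ρN ρ') =
        hopfRHS k A (sumAct k A ωM ωN ω') (sumCo k A ρM ρN ρ') ↔
      Cocycle3YD k A ωM ρM ωN ρN ω' ρ' := by
  rw [cocycle3YD_iff]
  constructor
  · intro h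
    have := congr(rTensor A (fst k N M) ∘ₗ $h ∘ₗ lTensor A (inr k N M))
    rw [ydLHS_sum_comp_lTensor_inr, hopfRHS_sum_comp_lTensor_inr] at this
    simpa only [comp_add, ← comp_assoc, ← rTensor_comp, fst_comp_inl, fst_comp_inr, rTensor_id,
      rTensor_zero, id_comp, zero_comp, add_zero] using this.symm
  · intro h
    refine lTensor_prod_ext ?_ ?_
    · rw [ydLHS_comp_lTensor (isBicompatHom_inl ωM ρM ωN ρN ω' ρ'),
        hopfRHS_comp_lTensor (isBicompatHom_inl ωM ρM ωN ρN ω' ρ'), hN]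
    · rw [ydLHS_sum_comp_lTensor_inr, hopfRHS_sum_comp_lTensor_inr, hM, h]

theorem isYetterDrinfeld_sum_iff (hM : IsYetterDrinfeld k A ωM ρM)
    (hN : IsYetterDrinfeld k A ωN ρN) :
    IsYetterDrinfeld k A (sumAct k A ωM ωN ω') (sumCo k A ρM ρN ρ') ↔
      Z1YD k A ωM ρM ωN ρN ω' ρ' := by
  rw [IsYetterDrinfeld, isModule_sumAct_iff hM.1 hN.1, isComodule_sumCo_iff hM.2.1 hN.2.1,
    ydLHS_sum_eq_hopfRHS_sum_iff hM.2.2 hN.2.2]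
  rfl

end SumCocycle

section Extensions

open LinearMap

variable {k : Type} [Field k] {A : Type} [Ring A] [Bialgebra k A]
variable {M N E : Type} [AddCommGroup M] [Module k M] [AddCommGroup N] [Module k N]
  [AddCommGroup E] [Module k E]
variable {ωM : A ⊗[k] M →ₗ[k] M} {ρM : M →ₗ[k] M ⊗[k] A}
variable {ωN : A ⊗[k] N →ₗ[k] N} {ρN : N →ₗ[k] N ⊗[k] A}

lemma eq_sum_of_isBicompatHom {ω : A ⊗[k] (N × M) →ₗ[k] N × M} {ρ : N × M →ₗ[k] (N × M) ⊗[k] A}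
    (hinl : IsBicompatHom k A ωN ρN ω ρ (inl k N M))
    (hsnd : IsBicompatHom k A ω ρ ωM ρM (snd k N M)) :
    ω = sumAct k A ωM ωN (fst k N M ∘ₗ ω ∘ₗ lTensor A (inr k N M)) ∧
      ρ = sumCo k A ρM ρN (rTensor A (fst k N M) ∘ₗ ρ ∘ₗ inr k N M) := by
  obtain ⟨hωl, hρl⟩ := (isBicompatHom_iff _).1 hinl
  obtain ⟨hωs, hρs⟩ := (isBicompatHom_iff _).1 hsnd
  have hid : inl k N M ∘ₗ fst k N M + inr k N M ∘ₗ snd k N M = LinearMap.id := by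
    ext <;> simp
  constructor
  · refine TensorProduct.ext' fun a x => Prod.ext ?_ ?_
    · have hx : x = (x.1, 0) + (0, x.2) := by simp
      have hl : ω (a ⊗ₜ (x.1, 0)) = (ωN (a ⊗ₜ x.1), 0) := by simpa using congr($hωl (a ⊗ₜ x.1)).symm
      conv_lhs => rw [hx, TensorProduct.tmul_add, map_add, hl]
      simp
    · simpa using congr($hωs (a ⊗ₜ x))
  · refine prod_ext ?_ ?_
    · rw [hρl, sumCo_comp_inl]
    · rw [sumCo_comp_inr]
      calc ρ ∘ₗ inr k N M
          = rTensor A (inl k N M ∘ₗ fst k N M + inr k N M ∘ₗ snd k N M) ∘ₗ ρ ∘ₗ inr k N M := by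
            rw [hid, rTensor_id, id_comp]
        _ = _ := by
            rw [rTensor_add, rTensor_comp, rTensor_comp, add_comp, comp_assoc, comp_assoc,
              ← comp_assoc (inr k N M) ρ (rTensor A (snd k N M)), ← hρs, comp_assoc, snd_comp_inr,
              comp_id]

lemma exists_linearEquiv_prod_of_exact {ι : N →ₗ[k] E} {π : E →ₗ[k] M}
    (hι : Function.Injective ι) (hπ : Function.Surjective π) (hex : range ι = ker π) :
    ∃ φ : E ≃ₗ[k] N × M, φ.toLinearMap ∘ₗ ι = inl k N M ∧ snd k N M ∘ₗ φ.toLinearMap = π := by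
  obtain ⟨s, hs⟩ := π.exists_rightInverse_of_surjective (range_eq_top.2 hπ)
  obtain ⟨φ, hφ⟩ := (exact_iff.2 hex.symm).splitSurjectiveEquiv hι ⟨s, hs⟩
  refine ⟨φ, ?_, hφ.2.symm⟩
  rw [hφ.1, ← comp_assoc, LinearEquiv.comp_symm, id_comp]

theorem exists_cocycle_of_extension (hM : IsYetterDrinfeld k A ωM ρM)
    (hN : IsYetterDrinfeld k A ωN ρN) {ωE : A ⊗[k] E →ₗ[k] E} {ρE : E →ₗ[k] E ⊗[k] A}
    {ι : N →ₗ[k] E} {π : E →ₗ[k] M} (hE : IsYetterDrinfeld k A ωE ρE)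
    (hιE : IsBicompatHom k A ωN ρN ωE ρE ι) (hπE : IsBicompatHom k A ωE ρE ωM ρM π)
    (hι : Function.Injective ι) (hπ : Function.Surjective π) (hex : range ι = ker π) :
    ∃ (ω' : A ⊗[k] M →ₗ[k] N) (ρ' : M →ₗ[k] N ⊗[k] A), Z1YD k A ωM ρM ωN ρN ω' ρ' ∧
      ∃ φ : E ≃ₗ[k] N × M,
        IsBicompatHom k A ωE ρE (sumAct k A ωM ωN ω') (sumCo k A ρM ρN ρ') φ.toLinearMap ∧
        φ.toLinearMap ∘ₗ ι = inl k N M ∧ snd k N M ∘ₗ φ.toLinearMap = π := by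
  obtain ⟨φ, hφι, hφπ⟩ := exists_linearEquiv_prod_of_exact hι hπ hex
  set ω := φ.toLinearMap ∘ₗ ωE ∘ₗ lTensor A φ.symm.toLinearMap
  set ρ := rTensor A φ.toLinearMap ∘ₗ ρE ∘ₗ φ.symm.toLinearMap
  have hφ : IsBicompatHom k A ωE ρE ω ρ φ.toLinearMap := isBicompatHom_transport φ ωE ρE
  have hinl : IsBicompatHom k A ωN ρN ω ρ (inl k N M) := hφι ▸ hφ.comp hιE
  have hsnd : IsBicompatHom k A ω ρ ωM ρM (snd k N M) := by
    have := hπE.comp (isBicompatHom_transport_symm φ ωE ρE)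
    rwa [← hφπ, comp_assoc, LinearEquiv.comp_symm, comp_id] at this
  obtain ⟨hω, hρ⟩ := eq_sum_of_isBicompatHom hinl hsnd
  rw [hω, hρ] at hφ
  exact ⟨_, _, (isYetterDrinfeld_sum_iff hM hN).1 (hE.of_surjective hφ φ.surjective), φ, hφ, hφι,
    hφπ⟩

end Extensions

/-- For `(ω',ρ') ∈ Z^1(M,N)` the sequence
`0 → N → N ⊕_{(ω',ρ')} M → M → 0` is an extension of `M` by `N` in the category of
left-right Yetter-Drinfel'd modules, and every extension of `M` by `N` in this
category is equivalent to one of this form. -/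
theorem extension_classification (k : Type) [Field k] (A : Type) [Ring A] [Bialgebra k A]
    (M N : Type) [AddCommGroup M] [Module k M] [AddCommGroup N] [Module k N]
    (ωM : A ⊗[k] M →ₗ[k] M) (ρM : M →ₗ[k] M ⊗[k] A)
    (ωN : A ⊗[k] N →ₗ[k] N) (ρN : N →ₗ[k] N ⊗[k] A)
    (hM : IsYetterDrinfeld k A ωM ρM) (hN : IsYetterDrinfeld k A ωN ρN) :
    -- (a) the canonical sequence attached to a 1-cocycle is an extension:
    (∀ (ω' : A ⊗[k] M →ₗ[k] N) (ρ' : M →ₗ[k] N ⊗[k] A),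
      Z1YD k A ωM ρM ωN ρN ω' ρ' →
        IsYetterDrinfeld k A (sumAct k A ωM ωN ω') (sumCo k A ρM ρN ρ') ∧
        IsBicompatHom k A ωN ρN (sumAct k A ωM ωN ω') (sumCo k A ρM ρN ρ')
          (LinearMap.inl k N M) ∧
        IsBicompatHom k A (sumAct k A ωM ωN ω') (sumCo k A ρM ρN ρ') ωM ρM
          (LinearMap.snd k N M) ∧
        Function.Injective (LinearMap.inl k N M) ∧
        Function.Surjective (LinearMap.snd k N M) ∧
        LinearMap.range (LinearMap.inl k N M) = LinearMap.ker (LinearMap.snd k N M)) ∧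
    -- (b) every extension of `M` by `N` is equivalent to one of this form:
    (∀ (E : Type) [AddCommGroup E] [Module k E],
      ∀ (ωE : A ⊗[k] E →ₗ[k] E) (ρE : E →ₗ[k] E ⊗[k] A) (ι : N →ₗ[k] E) (π : E →ₗ[k] M),
      IsYetterDrinfeld k A ωE ρE →
      IsBicompatHom k A ωN ρN ωE ρE ι →
      IsBicompatHom k A ωE ρE ωM ρM π →
      Function.Injective ι → Function.Surjective π →
      LinearMap.range ι = LinearMap.ker π →
      ∃ (ω' : A ⊗[k] M →ₗ[k] N) (ρ' : M →ₗ[k] N ⊗[k] A),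
        Z1YD k A ωM ρM ωN ρN ω' ρ' ∧
        ∃ φ : E ≃ₗ[k] N × M,
          IsBicompatHom k A ωE ρE (sumAct k A ωM ωN ω') (sumCo k A ρM ρN ρ')
            φ.toLinearMap ∧
          φ.toLinearMap.comp ι = LinearMap.inl k N M ∧
          (LinearMap.snd k N M).comp φ.toLinearMap = π) := by
  refine ⟨fun ω' ρ' hZ => ?_, fun E _ _ ωE ρE ι π hE hιE hπE hι hπ hex =>
    exists_cocycle_of_extension hM hN hE hιE hπE hι hπ hex⟩
  exact ⟨(isYetterDrinfeld_sum_iff hM hN).2 hZ, isBicompatHom_inl ωM ρM ωN ρN ω' ρ',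
    isBicompatHom_snd ωM ρM ωN ρN ω' ρ', LinearMap.inl_injective, LinearMap.snd_surjective,
    LinearMap.range_inl k N M⟩

end PS
end
end

section
/- Let A be a bialgebra and take M = N = k with trivial left-right Yetter-Drinfel'd module structure (a·λ = ε(a)λ and ρ(λ) = λ⊗1). Then the Yetter-Drinfel'd double complex (Y^{n,p}(k,k), d_m, d_c) specializes to the Gerstenhaber-Schack bicomplex of the bialgebra A: Y^{n,p}(k,k) = Hom(A^{⊗n}, A^{⊗p}), the horizontal faces are b_0(f)(a^1⊗...⊗a^{n+1}) = a^1·f(a^2⊗...⊗a^{n+1}) and b_{n+1}(f)(a^1⊗...⊗a^{n+1}) = f(a^1⊗...⊗a^n)·a^{n+1} (diagonal A-bimodule structure on A^{⊗p}) with b_i multiplying a^i a^{i+1} for 1≤i≤n, and the vertical cofaces are c_0(f)(a^1⊗...⊗a^n) = Σ (a^1)_1...(a^n)_1 ⊗ f((a^1)_2⊗...⊗(a^n)_2), c_i = (applying Δ on the i-th position of the output) for 1≤i≤p, and c_{p+1}(f)(a^1⊗...⊗a^n) = Σ f((a^1)_1⊗...⊗(a^n)_1) ⊗ (a^1)_2...(a^n)_2.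 -/
open TensorProduct
noncomputable section

namespace PS

variable (k : Type) [Field k] (A : Type) [Ring A] [Bialgebra k A]

section GS

variable (k : Type) [Field k] (A : Type) [Ring A] [Bialgebra k A]

/-- The trivial left action of `A` on `k`: `a · λ = ε(a)λ`. -/
def ωtriv : A ⊗[k] k →ₗ[k] k :=
  (TensorProduct.lid k k).toLinearMap.comp
    (TensorProduct.map (εA k A) (LinearMap.id : k →ₗ[k] k))

/-- The trivial right action of `A` on `k`: `λ · a = λ ε(a)`. -/
def ωtrivR : k ⊗[k] A →ₗ[k] k :=
  (TensorProduct.rid k k).toLinearMap.comp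
    (TensorProduct.map (LinearMap.id : k →ₗ[k] k) (εA k A))

/-- The trivial coaction of `A` on `k`: `λ ↦ λ ⊗ 1`. -/
def ρtriv : k →ₗ[k] k ⊗[k] A :=
  (TensorProduct.map (LinearMap.id : k →ₗ[k] k) (Algebra.linearMap k A)).comp
    (TensorProduct.rid k k).symm.toLinearMap

/-- Gerstenhaber-Schack cochains: `Hom(A^{⊗n}, A^{⊗p})`. -/
abbrev Gc (n p : ℕ) : Type := (Pk k A n : Type) →ₗ[k] (Pk k A p : Type)

/-- The Gerstenhaber-Schack horizontal faces (Hochschild-type), with the diagonal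
left and right `A`-module structures on `A^{⊗p}`. -/
def bGS (n p : ℕ) (i : ℕ) (g : Gc k A n p) : Gc k A (n+1) p :=
  if i = 0 then
    (ldiag k A (ωtriv k A) p).comp
      ((TensorProduct.map (LinearMap.id : A →ₗ[k] A) g).comp
        (insP k A n).symm.toLinearMap)
  else if i ≤ n then
    g.comp (mulP k A n i)
  else
    (rdiagAct k A (ωtrivR k A) p).comp
      (TensorProduct.map g (LinearMap.id : A →ₗ[k] A))

/-- The Gerstenhaber-Schack vertical cofaces (coHochschild-type). -/
def cGS (n p : ℕ) (j : ℕ) (g : Gc k A n p) : Gc k A n (p+1) :=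
  if j = 0 then
    ((insP k A p).toLinearMap).comp
      ((TensorProduct.map (LinearMap.id : A →ₗ[k] A) g).comp (dL k A n))
  else if j ≤ p then
    (comulAt k A p j).comp g
  else
    (TensorProduct.map g (LinearMap.id : A →ₗ[k] A)).comp (dR k A n)

/-- Identify `Y^{n,p}(k,k) = Hom(A^{⊗n} ⊗ k, k ⊗ A^{⊗p})` with `Hom(A^{⊗n}, A^{⊗p})`. -/
def toGc (n p : ℕ) (f : Yc k A k k n p) : Gc k A n p :=
  f.comp (TensorProduct.rid k (Pk k A n : Type)).symm.toLinearMap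

end GS


/-! With the trivial action and coaction on `k`, every `a · λ` in the Yetter-Drinfel'd faces
becomes `ε(a)λ` and every `ρ(λ)` becomes `λ ⊗ 1`. The counit axiom `Σ a₁ ε(a₂) = a` turns the
last horizontal face into the diagonal right action; the unit `1` disappears from the last
vertical face; and on `k ⊗ A^{⊗p}` the coaction on the base followed by right multiplication by
`a` just inserts `a` as the new first tensorand, which turns `c₀` into the Gerstenhaber-Schack
coface. The middle faces agree on the nose. -/

section TrivialYD

theorem assoc_tmul_one {R V W : Type*} [CommSemiring R] [AddCommMonoid V] [Module R V]
    [AddCommMonoid W] [Module R W] (z : V ⊗[R] W) :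
    TensorProduct.assoc R V W R (z ⊗ₜ 1) =
      (TensorProduct.rid R W).symm.toLinearMap.lTensor V z := by
  induction z using TensorProduct.induction_on with
  | zero => simp
  | tmul v w => simp
  | add x y hx hy => simp [add_tmul, hx, hy]

/- The `_form_` lemmas state composites from `faceLastYD`, `cofLast` and the recursion of
`shiftB`/`rmulBase`/`rhoBase` over arbitrary modules: on `pwr` these composites typecheck only
after unfolding `pwr`, which blocks `simp`. -/

theorem rmulBase_form_succ {R A V W U : Type*} [CommSemiring R] [AddCommMonoid A] [Module R A]
    [AddCommMonoid V] [Module R V] [AddCommMonoid W] [Module R W] [AddCommMonoid U] [Module R U]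
    (ρ : V →ₗ[R] W) (m : W ⊗[R] A →ₗ[R] W) (s : W →ₗ[R] U) :
    TensorProduct.map s LinearMap.id ∘ₗ
      (TensorProduct.map m LinearMap.id ∘ₗ (TensorProduct.assoc R W A A).symm.toLinearMap ∘ₗ
        TensorProduct.map LinearMap.id (TensorProduct.comm R A A).toLinearMap ∘ₗ
        (TensorProduct.assoc R W A A).toLinearMap) ∘ₗ
      (TensorProduct.comm R A (W ⊗[R] A)).toLinearMap ∘ₗ
      (TensorProduct.map ρ LinearMap.id).lTensor A =
    (s ∘ₗ m ∘ₗ (TensorProduct.comm R A W).toLinearMap ∘ₗ ρ.lTensor A).rTensor A ∘ₗ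
      (TensorProduct.assoc R A V A).symm.toLinearMap := by
  ext; simp

variable (k : Type) [Field k] (A : Type) [Ring A] [Bialgebra k A]

theorem rdiagE_eq_rdiagAct {N : Type} [AddCommGroup N] [Module k N] :
    ∀ p : ℕ, rdiagE k A (N := N) p =
      rdiagAct k A ((TensorProduct.rid k N).toLinearMap ∘ₗ (εA k A).lTensor N) p
  | 0 => rfl
  | p + 1 => by rw [rdiagE, rdiagAct, rdiagE_eq_rdiagAct p]

theorem faceLastYD_form_ωtriv {V W : Type*} [AddCommMonoid V] [Module k V] [AddCommMonoid W]
    [Module k W] (R : W ⊗[k] A →ₗ[k] W) (f : V ⊗[k] k →ₗ[k] W) :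
    (R ∘ₗ (TensorProduct.comm k A W).toLinearMap ∘ₗ
      TensorProduct.map LinearMap.id (f ∘ₗ TensorProduct.map LinearMap.id (ωtriv k A)) ∘ₗ
      (TensorProduct.leftComm k V A (A ⊗[k] k)).toLinearMap ∘ₗ
      TensorProduct.map LinearMap.id (TensorProduct.assoc k A A k).toLinearMap ∘ₗ
      (TensorProduct.assoc k V (A ⊗[k] A) k).toLinearMap ∘ₗ
      TensorProduct.map (TensorProduct.map LinearMap.id (ΔA k A)) LinearMap.id) ∘ₗ
      (TensorProduct.rid k (V ⊗[k] A)).symm.toLinearMap =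
    R ∘ₗ TensorProduct.map (f ∘ₗ (TensorProduct.rid k V).symm.toLinearMap) LinearMap.id := by
  ext y a
  obtain ⟨ι, r⟩ : Σ ι, Coalgebra.Repr k a ι := ⟨_, Coalgebra.Repr.arbitrary k a⟩
  have counit := congrArg (R ∘ₗ (TensorProduct.comm k A W).toLinearMap ∘ₗ
    (f ∘ₗ TensorProduct.mk k V k y).lTensor A) (Coalgebra.sum_tmul_counit_eq r)
  simp only [map_sum, LinearMap.comp_apply, LinearMap.lTensor_tmul, TensorProduct.mk_apply,
    LinearEquiv.coe_coe, TensorProduct.comm_tmul] at counit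
  simpa [← r.eq, tmul_sum, sum_tmul, map_sum, ωtriv] using counit

theorem cofLast_form_ρtriv {V W : Type*} [AddCommMonoid V] [Module k V] [AddCommMonoid W]
    [Module k W] (d : V →ₗ[k] V ⊗[k] A) (f : V ⊗[k] k →ₗ[k] W) :
    (TensorProduct.map f (μA k A) ∘ₗ
      (TensorProduct.tensorTensorTensorComm k V A k A).toLinearMap ∘ₗ
      TensorProduct.map d (ρtriv k A)) ∘ₗ (TensorProduct.rid k V).symm.toLinearMap =
    TensorProduct.map (f ∘ₗ (TensorProduct.rid k V).symm.toLinearMap) LinearMap.id ∘ₗ d := by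
  ext x
  simp only [LinearMap.comp_apply, LinearEquiv.coe_coe, TensorProduct.rid_symm_apply,
    TensorProduct.map_tmul, ρtriv, LinearMap.id_apply]
  induction d x using TensorProduct.induction_on with
  | zero => simp
  | tmul v a => simp
  | add y z hy hz => simp_all [add_tmul]

theorem shiftB_rmulBase_rhoBase_ρtriv : ∀ p : ℕ,
    (shiftB k A (N := k) p).toLinearMap ∘ₗ rmulBase k A p ∘ₗ
      (TensorProduct.comm k A (pwr k A (ModuleCat.of k (k ⊗[k] A)) p)).toLinearMap ∘ₗ
      (rhoBase k A (ρtriv k A) p).lTensor A = (insP k A p).toLinearMap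
  | 0 => by
    apply TensorProduct.ext'
    intro a (c : k)
    show c ⊗ₜ[k] (Algebra.linearMap k A 1 * a) = c ⊗ₜ[k] a
    simp
  | p + 1 => by
    refine (rmulBase_form_succ _ _ _).trans ?_
    rw [shiftB_rmulBase_rhoBase_ρtriv p]
    rfl

theorem toGc_face0 (ωN : A ⊗[k] k →ₗ[k] k) (n p : ℕ) (f : Yc k A k k n p) :
    toGc k A (n+1) p (face0 k A ωN n p f) =
      ldiag k A ωN p ∘ₗ (toGc k A n p f).lTensor A ∘ₗ (insP k A n).symm.toLinearMap := by
  ext x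
  simp [toGc, face0, assoc_tmul_one, LinearMap.lTensor, TensorProduct.map_map]

theorem toGc_faceLastYD (n p : ℕ) (f : Yc k A k k n p) :
    toGc k A (n+1) p (faceLastYD k A (ωtriv k A) n p f) =
      rdiagAct k A (ωtrivR k A) p ∘ₗ (toGc k A n p f).rTensor A :=
  (faceLastYD_form_ωtriv k A (rdiagE k A p) f).trans (by rw [rdiagE_eq_rdiagAct]; rfl)

theorem toGc_cof0YD (n p : ℕ) (f : Yc k A k k n p) :
    toGc k A n (p+1) (cof0YD k A (ρtriv k A) n p f) =
      (insP k A p).toLinearMap ∘ₗ (toGc k A n p f).lTensor A ∘ₗ dL k A n := by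
  ext x
  simpa [toGc, cof0YD, assoc_tmul_one, LinearMap.lTensor, TensorProduct.map_map,
    LinearMap.comp_assoc] using LinearMap.congr_fun (shiftB_rmulBase_rhoBase_ρtriv k A p)
      ((toGc k A n p f).lTensor A (dL k A n x))

theorem toGc_cofLast (n p : ℕ) (f : Yc k A k k n p) :
    toGc k A n (p+1) (cofLast k A (ρtriv k A) n p f) =
      (toGc k A n p f).rTensor A ∘ₗ dR k A n :=
  cofLast_form_ρtriv k A (dR k A n) f

end TrivialYD

/-- For `M = N = k` with the trivial Yetter-Drinfel'd structure, the
Yetter-Drinfel'd bicomplex specializes (under the canonical identification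
`Hom(A^{⊗n} ⊗ k, k ⊗ A^{⊗p}) ≅ Hom(A^{⊗n}, A^{⊗p})`) to the Gerstenhaber-Schack
bicomplex of the bialgebra `A`. -/
theorem yd_trivial_is_GS (k : Type) [Field k] (A : Type) [Ring A] [Bialgebra k A]
    (n p : ℕ) (f : Yc k A k k n p) :
    (∀ i ≤ n + 1,
      toGc k A (n+1) p (bYD k A (ωtriv k A) (ωtriv k A) n p i f) =
        bGS k A n p i (toGc k A n p f)) ∧
    (∀ j ≤ p + 1,
      toGc k A n (p+1) (cYD k A (ρtriv k A) (ρtriv k A) n p j f) =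
        cGS k A n p j (toGc k A n p f)) := by
  refine ⟨fun i _ => ?_, fun j _ => ?_⟩
  · by_cases h0 : i = 0
    · simp only [bYD, bGS, h0, ↓reduceIte]
      exact toGc_face0 k A (ωtriv k A) n p f
    by_cases hn : i ≤ n
    · simp only [bYD, bGS, h0, hn, ↓reduceIte]
      rfl
    · simp only [bYD, bGS, h0, hn, ↓reduceIte]
      exact toGc_faceLastYD k A n p f
  · by_cases h0 : j = 0
    · simp only [cYD, cGS, h0, ↓reduceIte]
      exact toGc_cof0YD k A n p f
    by_cases hp : j ≤ p
    · simp only [cYD, cGS, h0, hp, ↓reduceIte]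
      rfl
    · simp only [cYD, cGS, h0, hp, ↓reduceIte]
      exact toGc_cofLast k A n p f

end PS
end
end

section
/- With M = V⊗A, N = W⊗A as above, every column of the Hopf-module double complex C^{n,p}(M,N) is acyclic: for p ≥ 0, if g ∈ C^{n,p+1}(M,N) satisfies d_c^{n,p+1}(g) = 0, then g = d_c^{n,p}(f) where f(a^1⊗...⊗a^n⊗v⊗a) = (id_W ⊗ ε ⊗ id_A^{⊗(p+1)})(g(a^1⊗...⊗a^n⊗v⊗a)). -/
/-!
Applying the counit to the `A`-factor of `N = W ⊗ A` gives a map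
`S : N ⊗ A^{⊗(p+1)} → N ⊗ A^{⊗p}` which is a contracting homotopy of every column:
`S ∘ c_0 = id` is the counit law `(ε ⊗ id) ∘ Δ = id`, and `S ∘ c_{j+1} = c_j ∘ S` for
`0 ≤ j ≤ p+1`, since `Δ` on the first output slot followed by `S` is `S` followed by the
coaction of `W ⊗ A`, while the remaining cofaces only touch slots that `S` leaves alone.
Hence `S ∘ d_c(g) + d_c(S ∘ g) = g`, and a cocycle `g` is the coboundary of `S ∘ g`.
-/
open TensorProduct
noncomputable section

namespace PS

variable (k : Type) [Field k] (A : Type) [Ring A] [Bialgebra k A]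

section Free

variable (k : Type) [Field k] (A : Type) [Ring A] [Bialgebra k A]
variable (V : Type) [AddCommGroup V] [Module k V]

/-- The free Hopf-module action on `V ⊗ A`: `a · (v ⊗ b) = v ⊗ ab`. -/
def ωFree : A ⊗[k] (V ⊗[k] A) →ₗ[k] V ⊗[k] A :=
  (TensorProduct.map (LinearMap.id : V →ₗ[k] V) (μA k A)).comp
    (TensorProduct.leftComm k A V A).toLinearMap

/-- The free Hopf-module coaction on `V ⊗ A`: `ρ(v ⊗ a) = Σ v ⊗ a_1 ⊗ a_2`. -/
def ρFree : V ⊗[k] A →ₗ[k] (V ⊗[k] A) ⊗[k] A :=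
  ((TensorProduct.assoc k V A A).symm.toLinearMap).comp
    (TensorProduct.map (LinearMap.id : V →ₗ[k] V) (ΔA k A))

end Free

section ColumnHomotopy

variable (W : Type) [AddCommGroup W] [Module k W]

lemma rTensor_rid_lTensor_counit_comp_assoc_symm :
    ((TensorProduct.rid k W).toLinearMap ∘ₗ (εA k A).lTensor W).rTensor A ∘ₗ
        (TensorProduct.assoc k W A A).symm.toLinearMap =
      ((TensorProduct.lid k A).toLinearMap ∘ₗ (εA k A).rTensor A).lTensor W :=
  TensorProduct.ext_threefold' fun w a b => by simp [TensorProduct.smul_tmul]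

lemma rTensor_rTensor_comp_assoc_symm_comp_lTensor_comul {P Q : Type}
    [AddCommGroup P] [Module k P] [AddCommGroup Q] [Module k Q] (f : P →ₗ[k] Q) :
    (f.rTensor A).rTensor A ∘ₗ (TensorProduct.assoc k P A A).symm.toLinearMap ∘ₗ
        (ΔA k A).lTensor P =
      (TensorProduct.assoc k Q A A).symm.toLinearMap ∘ₗ (ΔA k A).lTensor Q ∘ₗ
        f.rTensor A := by
  rw [← LinearMap.comp_assoc, LinearMap.rTensor, LinearMap.rTensor,
    TensorProduct.map_map_comp_assoc_symm_eq, TensorProduct.map_id, LinearMap.comp_assoc]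
  congr 1
  exact TensorProduct.ext' fun _ _ => rfl

lemma comulAt_succ_of_ne {N : Type} [AddCommGroup N] [Module k N] (q i : ℕ) (h : i ≠ q + 1) :
    comulAt k A (q+1) i (N := N) = TensorProduct.map (comulAt k A q i) LinearMap.id := by
  rw [comulAt]
  exact if_neg h

lemma comulAt_succ_self {N : Type} [AddCommGroup N] [Module k N] (q : ℕ) :
    comulAt k A (q+1) (q+1) (N := N) =
      (TensorProduct.assoc k (Cd k A N q) A A).symm.toLinearMap ∘ₗ (ΔA k A).lTensor _ := by
  rw [comulAt]
  exact if_pos rfl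

def columnHomotopy (p : ℕ) : Cd k A (W ⊗[k] A) (p+1) →ₗ[k] Cd k A (W ⊗[k] A) p :=
  (shiftB k A p).symm.toLinearMap ∘ₗ epsBase k A (p+1)

lemma columnHomotopy_succ (p : ℕ) :
    columnHomotopy k A W (p+1) = TensorProduct.map (columnHomotopy k A W p) LinearMap.id := by
  change TensorProduct.map (shiftB k A p).symm.toLinearMap LinearMap.id ∘ₗ
    TensorProduct.map (epsBase k A (p+1)) LinearMap.id = _
  rw [← TensorProduct.map_comp, LinearMap.id_comp]
  rfl

lemma columnHomotopy_comp_cof0 (p : ℕ) :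
    columnHomotopy k A W p ∘ₗ (shiftB k A p).toLinearMap ∘ₗ rhoBase k A (ρFree k A W) p =
      LinearMap.id := by
  induction p with
  | zero =>
    refine TensorProduct.ext' fun w a => ?_
    change (((TensorProduct.rid k W).toLinearMap ∘ₗ (εA k A).lTensor W).rTensor A ∘ₗ
        (TensorProduct.assoc k W A A).symm.toLinearMap) (w ⊗ₜ ΔA k A a) = w ⊗ₜ a
    rw [rTensor_rid_lTensor_counit_comp_assoc_symm]
    simp [Coalgebra.rTensor_counit_comul]
  | succ p ih =>
    rw [columnHomotopy_succ]
    change TensorProduct.map _ _ ∘ₗ TensorProduct.map _ _ ∘ₗ TensorProduct.map _ _ = _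
    rw [← TensorProduct.map_comp, ← TensorProduct.map_comp, ih]
    exact TensorProduct.map_id

lemma columnHomotopy_comp_comulAt_one (p : ℕ) :
    columnHomotopy k A W (p+1) ∘ₗ comulAt k A (p+1) 1 =
      (shiftB k A p).toLinearMap ∘ₗ rhoBase k A (ρFree k A W) p ∘ₗ
        columnHomotopy k A W p := by
  induction p with
  | zero =>
    rw [columnHomotopy_succ]
    exact rTensor_rTensor_comp_assoc_symm_comp_lTensor_comul k A (epsBase k A 0 (N := W))
  | succ p ih =>
    rw [columnHomotopy_succ, comulAt_succ_of_ne k A (p+1) 1 (by omega)]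
    refine (TensorProduct.map_comp _ _ _ _).symm.trans ?_
    rw [ih, columnHomotopy_succ]
    change _ = TensorProduct.map _ _ ∘ₗ TensorProduct.map _ _ ∘ₗ TensorProduct.map _ _
    rw [← TensorProduct.map_comp, ← TensorProduct.map_comp]
    rfl

lemma columnHomotopy_comp_comulAt_succ (p j : ℕ) (h1 : 1 ≤ j) (h2 : j ≤ p) :
    columnHomotopy k A W (p+1) ∘ₗ comulAt k A (p+1) (j+1) =
      comulAt k A p j ∘ₗ columnHomotopy k A W p := by
  induction p with
  | zero => omega
  | succ q ih =>
    rcases Nat.lt_or_ge j (q+1) with hlt | hge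
    · rw [columnHomotopy_succ, comulAt_succ_of_ne k A (q+1) (j+1) (by omega)]
      refine (TensorProduct.map_comp _ _ _ _).symm.trans ?_
      rw [ih (by omega), comulAt_succ_of_ne k A q j (by omega), columnHomotopy_succ]
      exact TensorProduct.map_comp _ _ _ _
    · obtain rfl : j = q + 1 := by omega
      rw [columnHomotopy_succ, comulAt_succ_self, comulAt_succ_self, columnHomotopy_succ]
      exact rTensor_rTensor_comp_assoc_symm_comp_lTensor_comul k A (columnHomotopy k A W q)

variable {M : Type} [AddCommGroup M] [Module k M] (ρM : M →ₗ[k] M ⊗[k] A)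

lemma columnHomotopy_comp_cH_zero (n p : ℕ) (g : Yc k A M (W ⊗[k] A) n (p+1)) :
    columnHomotopy k A W (p+1) ∘ₗ cH k A ρM (ρFree k A W) n (p+1) 0 g = g := by
  rw [cH, if_pos rfl, cof0H, ← LinearMap.comp_assoc, ← LinearMap.comp_assoc,
    LinearMap.comp_assoc _ (shiftB k A (p+1)).toLinearMap, columnHomotopy_comp_cof0,
    LinearMap.id_comp]

lemma columnHomotopy_comp_cH_succ (n p j : ℕ) (hj : j ≤ p + 1)
    (g : Yc k A M (W ⊗[k] A) n (p+1)) :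
    columnHomotopy k A W (p+1) ∘ₗ cH k A ρM (ρFree k A W) n (p+1) (j+1) g =
      cH k A ρM (ρFree k A W) n p j (columnHomotopy k A W p ∘ₗ g) := by
  rcases Nat.eq_zero_or_pos j with rfl | hpos
  · rw [cH, if_neg (by omega), if_pos (by omega), cH, if_pos rfl, cof0H, ← LinearMap.comp_assoc,
      columnHomotopy_comp_comulAt_one, LinearMap.comp_assoc, LinearMap.comp_assoc]
  rcases Nat.lt_or_ge j (p+1) with hlt | hge
  · rw [cH, if_neg (by omega), if_pos (by omega), cH, if_neg (by omega), if_pos (by omega),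
      ← LinearMap.comp_assoc, columnHomotopy_comp_comulAt_succ k A W p j hpos (by omega),
      LinearMap.comp_assoc]
  · obtain rfl : j = p + 1 := by omega
    rw [cH, if_neg (by omega), if_neg (by omega), cH, if_neg (by omega), if_neg (by omega),
      cofLast, cofLast, ← LinearMap.comp_assoc, columnHomotopy_succ]
    exact LinearMap.ext fun _ => LinearMap.congr_fun
      (TensorProduct.map_comp (columnHomotopy k A W p) LinearMap.id g (μA k A)).symm _

lemma columnHomotopy_comp_dcH_add_dcH (n p : ℕ) (g : Yc k A M (W ⊗[k] A) n (p+1)) :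
    columnHomotopy k A W (p+1) ∘ₗ dcH k A ρM (ρFree k A W) n (p+1) g +
      dcH k A ρM (ρFree k A W) n p (columnHomotopy k A W p ∘ₗ g) = g := by
  let postcomp : Yc k A M (W ⊗[k] A) n (p+2) →ₗ[k] Yc k A M (W ⊗[k] A) n (p+1) :=
    LinearMap.compRight k (columnHomotopy k A W (p+1))
  have hsum : postcomp (dcH k A ρM (ρFree k A W) n (p+1) g) =
      g - dcH k A ρM (ρFree k A W) n p (columnHomotopy k A W p ∘ₗ g) := by
    rw [dcH, dcH, map_sum, Finset.sum_range_succ', ← neg_add_eq_sub, ← Finset.sum_neg_distrib]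
    congr 1
    · refine Finset.sum_congr rfl fun j hj => ?_
      rw [map_zsmul, LinearMap.compRight_apply,
        columnHomotopy_comp_cH_succ k A W ρM n p j (Finset.mem_range_succ_iff.mp hj), pow_succ,
        mul_neg_one, neg_smul]
    · rw [map_zsmul, LinearMap.compRight_apply, columnHomotopy_comp_cH_zero, pow_zero, one_smul]
  rw [LinearMap.compRight_apply] at hsum
  rw [hsum, sub_add_cancel]

end ColumnHomotopy

/-- For free Hopf modules `M = V ⊗ A`, `N = W ⊗ A`, every column of
the Hopf-module bicomplex is acyclic: if `d_c^{n,p+1}(g) = 0` then `g = d_c^{n,p}(f)`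
with `f = (id_W ⊗ ε ⊗ id^{⊗(p+1)}) ∘ g`. -/
theorem columns_acyclic (k : Type) [Field k] (A : Type) [Ring A] [Bialgebra k A]
    (V W : Type) [AddCommGroup V] [Module k V] [AddCommGroup W] [Module k W]
    (n p : ℕ) (g : Yc k A (V ⊗[k] A) (W ⊗[k] A) n (p+1))
    (hg : dcH k A (ρFree k A V) (ρFree k A W) n (p+1) g = 0) :
    dcH k A (ρFree k A V) (ρFree k A W) n p
      (((shiftB k A p).symm.toLinearMap).comp ((epsBase k A (p+1)).comp g)) = g := by
  have h := columnHomotopy_comp_dcH_add_dcH k A W (ρFree k A V) n p g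
  rw [hg, LinearMap.comp_zero, zero_add] at h
  exact h

end PS
end
end

section
/- Let A be a bialgebra with a skew antipode S̄ (Σ S̄(a_2)a_1 = Σ a_2 S̄(a_1) = ε(a)1) and let M be a left-right Hopf module over A. Then M is isomorphic, as a left-right Hopf module, to M^{co A} ⊗ A, where M^{co A} = {m ∈ M : ρ(m) = m⊗1} and M^{co A}⊗A carries the structure a·(v⊗b) = v⊗ab, ρ(v⊗a) = Σ v⊗a_1⊗a_2. -/
/-!
The inverse of `v ⊗ a ↦ a · v` is `m ↦ Σ P(m₀) ⊗ m₁`, where `P m = Σ S̄(m₁) · m₀`.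
The skew-antipode identities give `P (a · v) = ε(a) v` for coinvariant `v` and
`Σ m₁ · P(m₀) = m`, so the two maps are mutually inverse. That `P` lands in `M^{co A}` rests on
`Σ Δ(S̄ a₂)(1 ⊗ a₁) = S̄ a ⊗ 1`, a convolution-inverse computation: `op ∘ S̄` is a convolution
inverse of `op : A → Aᵐᵒᵖ`, and algebra maps out of `Aᵐᵒᵖ` transport this to `(A ⊗ A)ᵐᵒᵖ`.
-/
open TensorProduct
noncomputable section

namespace PS

variable (k : Type) [Field k] (A : Type) [Ring A] [Bialgebra k A]

section Total

variable (k : Type) [Field k] (A : Type) [Ring A] [Bialgebra k A]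
variable (M N : Type) [AddCommGroup M] [Module k M] [AddCommGroup N] [Module k N]
variable (ωM : A ⊗[k] M →ₗ[k] M) (ρM : M →ₗ[k] M ⊗[k] A)
variable (ωN : A ⊗[k] N →ₗ[k] N) (ρN : N →ₗ[k] N ⊗[k] A)

/-- Degree-`q` part of the total complex of the Hopf-module bicomplex:
`⊕_{n+p=q} C^{n,p}(M,N)`. -/
def TotH (q : ℕ) : Type := ∀ (n p : ℕ), n + p = q → Yc k A M N n p

instance (q : ℕ) : Zero (TotH k A M N q) := ⟨fun _ _ _ => 0⟩

/-- The total differential `D = d_m + (-1)^n d_c`. -/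
def DH (q : ℕ) (x : TotH k A M N q) : TotH k A M N (q+1) := fun n p h =>
  (match n, h with
    | 0, _ => 0
    | n'+1, h => dmH k A ωM ωN n' p (x n' p (by omega))) +
  (match p, h with
    | 0, _ => 0
    | p'+1, h => ((-1 : ℤ)^n) • dcH k A ρM ρN n p' (x n p' (by omega)))

/-- `S` is a skew antipode for the bialgebra `A`:
`Σ S(a_2)a_1 = Σ a_2 S(a_1) = ε(a)1`. -/
def IsSkewAntipode (S : A →ₗ[k] A) : Prop :=
  (μA k A).comp ((TensorProduct.map S (LinearMap.id : A →ₗ[k] A)).comp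
      (((TensorProduct.comm k A A).toLinearMap).comp (ΔA k A))) =
    (Algebra.linearMap k A).comp (εA k A) ∧
  (μA k A).comp ((TensorProduct.map (LinearMap.id : A →ₗ[k] A) S).comp
      (((TensorProduct.comm k A A).toLinearMap).comp (ΔA k A))) =
    (Algebra.linearMap k A).comp (εA k A)

end Total

section Coinv

variable (k : Type) [Field k] (A : Type) [Ring A] [Bialgebra k A]
variable (M : Type) [AddCommGroup M] [Module k M]

/-- `m ↦ m ⊗ 1 : M → M ⊗ A`. -/
def tensOne : M →ₗ[k] M ⊗[k] A :=
  (TensorProduct.map (LinearMap.id : M →ₗ[k] M) (Algebra.linearMap k A)).comp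
    (TensorProduct.rid k M).symm.toLinearMap

/-- The coinvariants `M^{co A} = {m ∈ M : ρ(m) = m ⊗ 1}` of a right comodule. -/
def coinv (ρM : M →ₗ[k] M ⊗[k] A) : Submodule k M :=
  LinearMap.ker (ρM - tensOne k A M)

end Coinv

open Coalgebra WithConv

section Convolution

variable {k C B B' : Type*} [CommSemiring k] [AddCommMonoid C] [Module k C] [Coalgebra k C]
  [Semiring B] [Algebra k B] [Semiring B'] [Algebra k B']

lemma algHom_comp_convMul_eq_one (h : B →ₐ[k] B') {f g : C →ₗ[k] B}
    (hfg : toConv f * toConv g = 1) :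
    toConv (h.toLinearMap ∘ₗ f) * toConv (h.toLinearMap ∘ₗ g) = 1 := by
  rw [← toConv_ofConv (_ * _), ← LinearMap.algHom_comp_convMul_distrib, ofConv_toConv,
    ofConv_toConv, hfg]
  ext c
  simp

end Convolution

section SkewAntipode

variable {k A : Type} [Field k] [Ring A] [Bialgebra k A] {S : A →ₗ[k] A}

local notation "opₗ" => LinearEquiv.toLinearMap (MulOpposite.opLinearEquiv k)

lemma IsSkewAntipode.sum_antipode_mul_eq_algebraMap_counit (hS : IsSkewAntipode k A S)
    {a : A} {ι : Type*} (r : Repr k a ι) :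
    ∑ i ∈ r.index, S (r.right i) * r.left i = algebraMap k A (counit a) := by
  simpa [← r.eq, map_sum] using LinearMap.congr_fun hS.1 a

lemma IsSkewAntipode.sum_mul_antipode_eq_algebraMap_counit (hS : IsSkewAntipode k A S)
    {a : A} {ι : Type*} (r : Repr k a ι) :
    ∑ i ∈ r.index, r.right i * S (r.left i) = algebraMap k A (counit a) := by
  simpa [← r.eq, map_sum] using LinearMap.congr_fun hS.2 a

lemma IsSkewAntipode.op_convMul_op_comp (hS : IsSkewAntipode k A S) :
    toConv opₗ * toConv (opₗ ∘ₗ S) = (1 : WithConv (A →ₗ[k] Aᵐᵒᵖ)) := by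
  ext a
  rw [(ℛ k a).convMul_apply]
  simp [← MulOpposite.op_mul, ← Finset.op_sum, hS.sum_antipode_mul_eq_algebraMap_counit]

lemma IsSkewAntipode.op_comp_convMul_op (hS : IsSkewAntipode k A S) :
    toConv (opₗ ∘ₗ S) * toConv opₗ = (1 : WithConv (A →ₗ[k] Aᵐᵒᵖ)) := by
  ext a
  rw [(ℛ k a).convMul_apply]
  simp [← MulOpposite.op_mul, ← Finset.op_sum, hS.sum_mul_antipode_eq_algebraMap_counit]

/- In the convolution algebra of linear maps `A → (A ⊗ A)ᵐᵒᵖ`, `comul = inl * inr` has inverse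
`comul ∘ S`, while `inl ∘ S` is a left inverse of `inl`; hence `inr * (comul ∘ S) = inl ∘ S`,
which is the claim read back in `A ⊗ A`. -/
lemma IsSkewAntipode.sum_comul_antipode_mul (hS : IsSkewAntipode k A S)
    {a : A} {ι : Type*} (r : Repr k a ι) :
    ∑ i ∈ r.index, comul (S (r.right i)) * ((1 : A) ⊗ₜ[k] r.left i) = S a ⊗ₜ[k] (1 : A) := by
  let comulOp := (Bialgebra.comulAlgHom k A).op.toLinearMap
  let inlOp := (Algebra.TensorProduct.includeLeft (R := k) (S := k) (A := A) (B := A)).op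
  let inrOp := (Algebra.TensorProduct.includeRight (R := k) (A := A) (B := A)).op
  let D := toConv (comulOp ∘ₗ opₗ)
  let DS := toConv (comulOp ∘ₗ opₗ ∘ₗ S)
  let I₁ := toConv (inlOp.toLinearMap ∘ₗ opₗ)
  let I₁S := toConv (inlOp.toLinearMap ∘ₗ opₗ ∘ₗ S)
  let I₂ := toConv (inrOp.toLinearMap ∘ₗ opₗ)
  have hD : D = I₁ * I₂ := by
    ext c
    rw [(ℛ k c).convMul_apply]
    simp [D, I₁, I₂, comulOp, inlOp, inrOp, ← MulOpposite.op_mul, ← Finset.op_sum,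
      ← (ℛ k c).eq]
  have hDS : D * DS = 1 := algHom_comp_convMul_eq_one _ hS.op_convMul_op_comp
  have hI₁S : I₁S * I₁ = 1 := algHom_comp_convMul_eq_one _ hS.op_comp_convMul_op
  have key : I₂ * DS = I₁S :=
    calc I₂ * DS = I₁S * I₁ * I₂ * DS := by rw [hI₁S, one_mul]
      _ = I₁S * (D * DS) := by rw [hD]; simp only [mul_assoc]
      _ = I₁S := by rw [hDS, mul_one]
  have := congrArg MulOpposite.unop (LinearMap.congr_fun (congrArg ofConv key) a)
  rw [r.convMul_apply] at this
  simpa [I₂, DS, I₁S, comulOp, inlOp, inrOp] using this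

end SkewAntipode

section HopfModule

variable {k A : Type} [Field k] [Ring A] [Bialgebra k A] {S : A →ₗ[k] A}
  {M : Type} [AddCommGroup M] [Module k M] {ω : A ⊗[k] M →ₗ[k] M} {ρ : M →ₗ[k] M ⊗[k] A}

lemma mem_coinv_iff {m : M} : m ∈ coinv k A M ρ ↔ ρ m = m ⊗ₜ 1 := by
  simp [coinv, tensOne, sub_eq_zero]

lemma IsModule.act_algebraMap (hω : IsModule k A ω) (r : k) (n : M) :
    ω (algebraMap k A r ⊗ₜ n) = r • n := by
  rw [Algebra.algebraMap_eq_smul_one, ← smul_tmul', map_smul, hω.1]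

variable (ω) in
def orbitMap (n : M) : A →ₗ[k] M := ω ∘ₗ (TensorProduct.mk k A M).flip n

@[simp] lemma orbitMap_apply (n : M) (a : A) : orbitMap ω n a = ω (a ⊗ₜ n) := rfl

/- `a · (n ⊗ b) = Σ a₁·n ⊗ a₂b`; the Hopf module condition says that `ρ` is `A`-linear
for this action. -/
variable (ω) in
def diagAct : A ⊗[k] (M ⊗[k] A) →ₗ[k] M ⊗[k] A :=
  map ω (μA k A) ∘ₗ (tensorTensorTensorComm k A A M A).toLinearMap ∘ₗ
    LinearMap.rTensor _ (ΔA k A)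

lemma diagAct_tmul (a : A) (n : M) (b : A) :
    diagAct ω (a ⊗ₜ (n ⊗ₜ b)) = LinearMap.rTensor A (orbitMap ω n) (comul a * (1 ⊗ₜ b)) := by
  simp only [diagAct, LinearMap.coe_comp, LinearEquiv.coe_coe, Function.comp_apply,
    LinearMap.rTensor_tmul]
  induction (comul (R := k) a) using TensorProduct.induction_on with
  | zero => simp
  | tmul x y => simp
  | add x y hx hy => simp [add_tmul, add_mul, hx, hy]

lemma IsHopfModule.rho_act (hM : IsHopfModule k A ω ρ) (a : A) (n : M) :
    ρ (ω (a ⊗ₜ n)) = diagAct ω (a ⊗ₜ ρ n) := by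
  simpa [hopfRHS, diagAct] using LinearMap.congr_fun hM.2.2 (a ⊗ₜ n)

lemma IsHopfModule.rho_act_of_mem_coinv (hM : IsHopfModule k A ω ρ) {v : M}
    (hv : v ∈ coinv k A M ρ) (a : A) :
    ρ (ω (a ⊗ₜ v)) = LinearMap.rTensor A (orbitMap ω v) (comul a) := by
  rw [hM.rho_act, mem_coinv_iff.1 hv, diagAct_tmul, ← Algebra.TensorProduct.one_def, mul_one]

variable (S ω) in
def skewAct : M ⊗[k] A →ₗ[k] M :=
  ω ∘ₗ LinearMap.rTensor M S ∘ₗ (TensorProduct.comm k M A).toLinearMap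

@[simp] lemma skewAct_tmul (n : M) (c : A) : skewAct S ω (n ⊗ₜ c) = ω (S c ⊗ₜ n) := rfl

variable (S ω ρ) in
def coinvProj : M →ₗ[k] M := skewAct S ω ∘ₗ ρ

lemma IsModule.sum_antipode_act_act (hω : IsModule k A ω) (hS : IsSkewAntipode k A S) (n : M)
    {c : A} {ι : Type*} (r : Repr k c ι) :
    ∑ i ∈ r.index, ω (S (r.right i) ⊗ₜ ω (r.left i ⊗ₜ n)) = counit (R := k) c • n := by
  simp only [hω.2, ← map_sum, ← sum_tmul, hS.sum_antipode_mul_eq_algebraMap_counit,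
    hω.act_algebraMap]

lemma IsModule.sum_act_antipode_act (hω : IsModule k A ω) (hS : IsSkewAntipode k A S) (n : M)
    {c : A} {ι : Type*} (r : Repr k c ι) :
    ∑ i ∈ r.index, ω (r.right i ⊗ₜ ω (S (r.left i) ⊗ₜ n)) = counit (R := k) c • n := by
  simp only [hω.2, ← map_sum, ← sum_tmul, hS.sum_mul_antipode_eq_algebraMap_counit,
    hω.act_algebraMap]

lemma coinvProj_comp_orbitMap (hS : IsSkewAntipode k A S) (hM : IsHopfModule k A ω ρ) {v : M}
    (hv : v ∈ coinv k A M ρ) :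
    coinvProj S ω ρ ∘ₗ orbitMap ω v = LinearMap.toSpanSingleton k M v ∘ₗ counit := by
  ext a
  simpa [coinvProj, hM.rho_act_of_mem_coinv hv, ← (ℛ k a).eq] using
    IsModule.sum_antipode_act_act hM.1 hS v (ℛ k a)

lemma rho_comp_skewAct (hM : IsHopfModule k A ω ρ) :
    ρ ∘ₗ skewAct S ω = diagAct ω ∘ₗ LinearMap.rTensor _ S ∘ₗ
      (TensorProduct.comm k (M ⊗[k] A) A).toLinearMap ∘ₗ map ρ LinearMap.id := by
  ext n c
  simp [hM.rho_act]

lemma sum_diagAct_antipode_tmul (hS : IsSkewAntipode k A S) (n : M)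
    {c : A} {ι : Type*} (r : Repr k c ι) :
    ∑ i ∈ r.index, diagAct ω (S (r.right i) ⊗ₜ (n ⊗ₜ r.left i)) = ω (S c ⊗ₜ n) ⊗ₜ 1 := by
  simp only [diagAct_tmul, ← map_sum, hS.sum_comul_antipode_mul, LinearMap.rTensor_tmul,
    orbitMap_apply]

lemma coinvProj_mem_coinv (hS : IsSkewAntipode k A S) (hM : IsHopfModule k A ω ρ) (m : M) :
    coinvProj S ω ρ m ∈ coinv k A M ρ := by
  have hcoinv : diagAct ω ∘ₗ LinearMap.rTensor _ S ∘ₗ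
      (TensorProduct.comm k (M ⊗[k] A) A).toLinearMap ∘ₗ
        (TensorProduct.assoc k M A A).symm.toLinearMap ∘ₗ map LinearMap.id (ΔA k A) =
      tensOne k A M ∘ₗ skewAct S ω := by
    ext n c
    simpa [← (ℛ k c).eq, tmul_sum, tensOne] using sum_diagAct_antipode_tmul hS n (ℛ k c)
  have : ρ ∘ₗ coinvProj S ω ρ = tensOne k A M ∘ₗ coinvProj S ω ρ := by
    rw [coinvProj, ← LinearMap.comp_assoc, rho_comp_skewAct hM]
    simp only [LinearMap.comp_assoc, hM.2.1.2]
    conv_rhs => rw [← LinearMap.comp_assoc, ← hcoinv]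
    simp only [LinearMap.comp_assoc]
  simpa [mem_coinv_iff, tensOne] using LinearMap.congr_fun this m

variable (ω ρ) in
def freeToHopf : coinv k A M ρ ⊗[k] A →ₗ[k] M :=
  ω ∘ₗ LinearMap.lTensor A (coinv k A M ρ).subtype ∘ₗ
    (TensorProduct.comm k (coinv k A M ρ) A).toLinearMap

@[simp] lemma freeToHopf_tmul (v : coinv k A M ρ) (a : A) :
    freeToHopf ω ρ (v ⊗ₜ a) = ω (a ⊗ₜ (v : M)) := rfl

def hopfToFree (hS : IsSkewAntipode k A S) (hM : IsHopfModule k A ω ρ) :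
    M →ₗ[k] coinv k A M ρ ⊗[k] A :=
  LinearMap.rTensor A ((coinvProj S ω ρ).codRestrict _ (coinvProj_mem_coinv hS hM)) ∘ₗ ρ

lemma freeToHopf_comp_hopfToFree (hS : IsSkewAntipode k A S) (hM : IsHopfModule k A ω ρ) :
    freeToHopf ω ρ ∘ₗ hopfToFree hS hM = LinearMap.id := by
  have hcounit : ω ∘ₗ LinearMap.lTensor A (skewAct S ω) ∘ₗ
      (TensorProduct.comm k (M ⊗[k] A) A).toLinearMap ∘ₗ
        (TensorProduct.assoc k M A A).symm.toLinearMap ∘ₗ map LinearMap.id (ΔA k A) =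
      (TensorProduct.rid k M).toLinearMap ∘ₗ map LinearMap.id (εA k A) := by
    ext n c
    simpa [← (ℛ k c).eq, tmul_sum] using IsModule.sum_act_antipode_act hM.1 hS n (ℛ k c)
  calc freeToHopf ω ρ ∘ₗ hopfToFree hS hM
      = ω ∘ₗ LinearMap.lTensor A (skewAct S ω) ∘ₗ
          (TensorProduct.comm k (M ⊗[k] A) A).toLinearMap ∘ₗ map ρ LinearMap.id ∘ₗ ρ := by
        have hskew : freeToHopf ω ρ ∘ₗ LinearMap.rTensor A
            ((coinvProj S ω ρ).codRestrict _ (coinvProj_mem_coinv hS hM)) =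
            ω ∘ₗ LinearMap.lTensor A (skewAct S ω) ∘ₗ
              (TensorProduct.comm k (M ⊗[k] A) A).toLinearMap ∘ₗ map ρ LinearMap.id := by
          ext n c
          rfl
        rw [hopfToFree, ← LinearMap.comp_assoc, hskew]
        simp only [LinearMap.comp_assoc]
    _ = (TensorProduct.rid k M).toLinearMap ∘ₗ map LinearMap.id (εA k A) ∘ₗ ρ := by
        rw [hM.2.1.2]
        conv_rhs => rw [← LinearMap.comp_assoc, ← hcounit]
        simp only [LinearMap.comp_assoc]
    _ = LinearMap.id := hM.2.1.1

lemma hopfToFree_comp_freeToHopf (hS : IsSkewAntipode k A S) (hM : IsHopfModule k A ω ρ) :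
    hopfToFree hS hM ∘ₗ freeToHopf ω ρ = LinearMap.id := by
  apply TensorProduct.ext'
  intro v a
  have hproj : (coinvProj S ω ρ).codRestrict _ (coinvProj_mem_coinv hS hM) ∘ₗ orbitMap ω v =
      LinearMap.toSpanSingleton k _ v ∘ₗ counit := by
    ext b
    exact LinearMap.congr_fun (coinvProj_comp_orbitMap hS hM v.2) b
  simp [hopfToFree, hM.rho_act_of_mem_coinv v.2, ← LinearMap.rTensor_comp_apply, hproj]
  rw [LinearMap.rTensor_comp_apply, rTensor_counit_comul]
  simp

lemma freeToHopf_comp_ωFree (hω : IsModule k A ω) :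
    freeToHopf ω ρ ∘ₗ ωFree k A (coinv k A M ρ) =
      ω ∘ₗ map LinearMap.id (freeToHopf ω ρ) := by
  apply TensorProduct.ext_threefold'
  intro a v b
  simp [ωFree, hω.2]

lemma rho_comp_freeToHopf (hM : IsHopfModule k A ω ρ) :
    ρ ∘ₗ freeToHopf ω ρ = map (freeToHopf ω ρ) LinearMap.id ∘ₗ ρFree k A (coinv k A M ρ) := by
  apply TensorProduct.ext'
  intro v a
  have horbit : LinearMap.rTensor A (orbitMap ω (v : M)) =
      map (freeToHopf ω ρ) LinearMap.id ∘ₗ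
        (TensorProduct.assoc k (coinv k A M ρ) A A).symm.toLinearMap ∘ₗ
          TensorProduct.mk k (coinv k A M ρ) (A ⊗[k] A) v := by
    ext x y
    rfl
  simp [hM.rho_act_of_mem_coinv v.2, ρFree, horbit]

end HopfModule

/-- fundamental theorem of Hopf modules, left-right version.
If `A` is a bialgebra with a skew antipode and `M` is a left-right Hopf module over
`A`, then `M ≅ M^{co A} ⊗ A` as left-right Hopf modules, where `M^{co A} ⊗ A` carries
the free structure `a·(v ⊗ b) = v ⊗ ab`, `ρ(v ⊗ a) = Σ v ⊗ a_1 ⊗ a_2`. -/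
theorem hopf_module_fundamental (k : Type) [Field k] (A : Type) [Ring A]
    [Bialgebra k A] (S : A →ₗ[k] A) (hS : IsSkewAntipode k A S)
    (M : Type) [AddCommGroup M] [Module k M]
    (ωM : A ⊗[k] M →ₗ[k] M) (ρM : M →ₗ[k] M ⊗[k] A)
    (hM : IsHopfModule k A ωM ρM) :
    ∃ e : ((coinv k A M ρM : Submodule k M) ⊗[k] A) ≃ₗ[k] M,
      e.toLinearMap.comp (ωFree k A (coinv k A M ρM)) =
        ωM.comp (TensorProduct.map (LinearMap.id : A →ₗ[k] A) e.toLinearMap) ∧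
      ρM.comp e.toLinearMap =
        (TensorProduct.map e.toLinearMap (LinearMap.id : A →ₗ[k] A)).comp
          (ρFree k A (coinv k A M ρM)) :=
  ⟨.ofLinearMap (freeToHopf ωM ρM) (hopfToFree hS hM) (freeToHopf_comp_hopfToFree hS hM)
      (hopfToFree_comp_freeToHopf hS hM),
    freeToHopf_comp_ωFree hM.1, rho_comp_freeToHopf hM⟩

end PS
end
end
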